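/- The value function 𝓤̂ : (−∞,0] × M → ℝ, 𝓤̂(t,ψ) = inf{ ∫_t^0 [ ½‖σ̇_s‖²_M − 𝓕̂(σ_s) ] ds + 𝓤̂₀(σ₀) : σ ∈ AC([t,0],M), σ_t = ψ }, is continuous, and it is H- and L²_ℤ-equivariant: 𝓤̂(t, ψ∘h + z) = 𝓤̂(t,ψ) for all (t,ψ,h,z) ∈ (−∞,0] × M × H × L²_ℤ. -/

import Mathlib

open MeasureTheory Set Filter Topology
open scoped ENNReal RealInnerProductSpace

noncomputable section

namespace MFG

instance : Fact ((0:ℝ) < 1) := ⟨zero_lt_one⟩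

/-- `ℝ^d` as a Euclidean (inner-product) space. -/
abbrev Rd (d : ℕ) := EuclideanSpace ℝ (Fin d)

/-- The half-open unit cube `[0,1)^d`. -/
def cube (d : ℕ) : Set (Rd d) := {x | ∀ i, 0 ≤ x i ∧ x i < 1}

/-- Lebesgue measure restricted to the cube `[0,1)^d`. -/
def cubeMeasure (d : ℕ) : Measure (Rd d) := volume.restrict (cube d)

/-- `M = L²([0,1)^d, ℝ^d)`. -/
abbrev Mspace (d : ℕ) := Lp (α := Rd d) (Rd d) 2 (cubeMeasure d)

/-- The vector of `ℝ^d` with integer coordinates `z`. -/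
def intVec {d : ℕ} (z : Fin d → ℤ) : Rd d :=
  (EuclideanSpace.equiv (Fin d) ℝ).symm fun i => (z i : ℝ)

/-- An element of `M` is integer-valued (i.e. belongs to `L²_ℤ`) if a.e. its values are
integer vectors. -/
def IsIntegerValued {d : ℕ} (z : Mspace d) : Prop :=
  ∀ᵐ x ∂(cubeMeasure d), ∃ k : Fin d → ℤ, z x = intVec k

/-- The group `H` of invertible bi-measurable maps of `[0,1)^d` preserving Lebesgue measure. -/
structure CubeAuto (d : ℕ) where
  toFun : Rd d → Rd d
  invFun : Rd d → Rd d
  measurable_toFun : Measurable toFun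
  measurable_invFun : Measurable invFun
  mapsTo : MapsTo toFun (cube d) (cube d)
  mapsTo_inv : MapsTo invFun (cube d) (cube d)
  leftInv : ∀ x ∈ cube d, invFun (toFun x) = x
  rightInv : ∀ x ∈ cube d, toFun (invFun x) = x
  measurePreserving : MeasurePreserving toFun (cubeMeasure d) (cubeMeasure d)

/-- Composition `ψ ∘ h` as an element of `M`. -/
def Mcomp {d : ℕ} (ψ : Mspace d) (h : CubeAuto d) : Mspace d :=
  Lp.compMeasurePreserving h.toFun h.measurePreserving ψ

/-- `ℤ^d`-periodicity of a function on `ℝ^d`. -/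
def IsPeriodicRd {d : ℕ} (f : Rd d → ℝ) : Prop :=
  ∀ (x : Rd d) (z : Fin d → ℤ), f (x + intVec z) = f x


/-- The data of the problem: a potential `φ` and final conditions `U⁰, U¹`, all of class `C³`
on the torus (i.e. `ℤ^d`-periodic on `ℝ^d`), with `φ` and `U¹` even. -/
structure GoodData (d : ℕ) where
  φ : Rd d → ℝ
  U0 : Rd d → ℝ
  U1 : Rd d → ℝ
  φ_smooth : ContDiff ℝ 3 φ
  U0_smooth : ContDiff ℝ 3 U0
  U1_smooth : ContDiff ℝ 3 U1
  φ_periodic : IsPeriodicRd φ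
  U0_periodic : IsPeriodicRd U0
  U1_periodic : IsPeriodicRd U1
  φ_even : ∀ x, φ (-x) = φ x
  U1_even : ∀ x, U1 (-x) = U1 x

/-- `𝓕̂(σ) = ½ ∫∫ φ(σ(x) − σ(y)) dx dy`. -/
def Fcal {d : ℕ} (D : GoodData d) (σ : Mspace d) : ℝ :=
  (1/2) * ∫ x, (∫ y, D.φ (σ x - σ y) ∂(cubeMeasure d)) ∂(cubeMeasure d)

/-- `𝓤̂₀(σ) = ∫∫ [U⁰(σ(x)) + ½U¹(σ(x)−σ(y))] dx dy`. -/
def U0cal {d : ℕ} (D : GoodData d) (σ : Mspace d) : ℝ :=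
  ∫ x, (D.U0 (σ x) + (1/2) * ∫ y, D.U1 (σ x - σ y) ∂(cubeMeasure d)) ∂(cubeMeasure d)

/-- `F̂(q,σ) = ∫ φ(q − σ(x)) dx`. -/
def Fhat {d : ℕ} (D : GoodData d) (q : Rd d) (σ : Mspace d) : ℝ :=
  ∫ x, D.φ (q - σ x) ∂(cubeMeasure d)

/-- `û₀(q,σ) = U⁰(q) + ∫ U¹(q − σ(x)) dx`. -/
def u0hat {d : ℕ} (D : GoodData d) (q : Rd d) (σ : Mspace d) : ℝ :=
  D.U0 q + ∫ x, D.U1 (q - σ x) ∂(cubeMeasure d)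

/-- Absolutely continuous curves `[a,b] → E` with square-integrable derivative `σ'`. -/
def IsACOn {E : Type*} [NormedAddCommGroup E] [NormedSpace ℝ E] [CompleteSpace E]
    (a b : ℝ) (σ σ' : ℝ → E) : Prop :=
  IntervalIntegrable σ' volume a b ∧
  IntervalIntegrable (fun s => ‖σ' s‖ ^ 2) volume a b ∧
  ∀ s ∈ Icc a b, σ s = σ a + ∫ u in a..s, σ' u

/-- The augmented action of a curve `σ` (with derivative `σ'`) on `[t,0]`. -/
def action {d : ℕ} (D : GoodData d) (t : ℝ) (σ σ' : ℝ → Mspace d) : ℝ :=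
  (∫ s in t..0, ((1:ℝ)/2 * ‖σ' s‖ ^ 2 - Fcal D (σ s))) + U0cal D (σ 0)

/-- The value function `𝓤̂(t,ψ)` on parametrizations. -/
def Uhat {d : ℕ} (D : GoodData d) (t : ℝ) (ψ : Mspace d) : ℝ :=
  sInf {A | ∃ σ σ' : ℝ → Mspace d, IsACOn t 0 σ σ' ∧ σ t = ψ ∧ A = action D t σ σ'}

/-- `σ` (with derivative `σ'`) minimizes the augmented action on `[t,0]` among absolutely
continuous curves starting at `ψ` at time `t`. -/
def IsMinimizer {d : ℕ} (D : GoodData d) (t : ℝ) (ψ : Mspace d) (σ σ' : ℝ → Mspace d) : Prop :=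
  IsACOn t 0 σ σ' ∧ σ t = ψ ∧
  ∀ η η' : ℝ → Mspace d, IsACOn t 0 η η' → η t = ψ →
    action D t σ σ' ≤ action D t η η'


/-- Encoding of the Hilbert space `H¹_M(−T,0)` as the (isometric) product `M × L²((−T,0),M)`:
an `H¹` curve corresponds to the pair (initial value, derivative), and the `H¹` norm
`‖σ_{−T}‖² + ∫‖σ̇‖²` is exactly the product Hilbert norm squared. -/
abbrev H1space (d : ℕ) (T : ℝ) :=
  Mspace d × (Lp (α := ℝ) (Mspace d) 2 (volume.restrict (Ioc (-T) (0:ℝ))))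

/-- The `d`-dimensional torus `𝕋^d = ℝ^d/ℤ^d`. -/
abbrev Td (d : ℕ) := Fin d → AddCircle (1:ℝ)

/-- The natural projection `π : ℝ^d → 𝕋^d`. -/
def torusProj {d : ℕ} (v : Rd d) : Td d := fun i => (v i : AddCircle (1:ℝ))

/-- The canonical lift `𝕋^d → [0,1)^d ⊆ ℝ^d`. -/
def liftTd {d : ℕ} (q : Td d) : Rd d :=
  (EuclideanSpace.equiv (Fin d) ℝ).symm fun i => ((AddCircle.equivIco 1 0 (q i) : Ico (0:ℝ) (0+1)) : ℝ)

/-- The law on `𝕋^d` of a parametrization `ψ ∈ M`, i.e. `(π∘ψ)_♯𝓛^d`. -/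
def lawTd {d : ℕ} (ψ : Mspace d) : Measure (Td d) :=
  (cubeMeasure d).map fun x => torusProj (ψ x)

/-- A Borel probability measure on `ℝ^d` with finite second moment, i.e. a member of `𝓟₂(ℝ^d)`. -/
def IsProb2 {d : ℕ} (μ : Measure (Rd d)) : Prop :=
  IsProbabilityMeasure μ ∧ Integrable (fun x => ‖x‖ ^ 2) μ

/-- `γ ∈ Γ(μ₁,μ₂)`: a coupling of `μ₁` and `μ₂`. -/
def IsCoupling {d : ℕ} (γ : Measure (Rd d × Rd d)) (μ₁ μ₂ : Measure (Rd d)) : Prop :=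
  IsProbabilityMeasure γ ∧ γ.map Prod.fst = μ₁ ∧ γ.map Prod.snd = μ₂

/-- Weak* convergence of a sequence of measures, tested against bounded continuous functions. -/
def TendstoWeakStar {X : Type*} [TopologicalSpace X] [MeasurableSpace X]
    (γn : ℕ → Measure X) (γ : Measure X) : Prop :=
  ∀ f : BoundedContinuousFunction X ℝ,
    Tendsto (fun n => ∫ x, f x ∂(γn n)) atTop (𝓝 (∫ x, f x ∂γ))

/-- The squared `2`-Wasserstein distance on `𝓟₂(ℝ^d)`. -/
def W2sq {d : ℕ} (μ₁ μ₂ : Measure (Rd d)) : ℝ :=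
  sInf {c | ∃ γ : Measure (Rd d × Rd d), IsCoupling γ μ₁ μ₂ ∧ c = ∫ p, ‖p.1 - p.2‖ ^ 2 ∂γ}

/-- `γ ∈ Ψ(μ₁,μ₂)` for measures on the torus: a probability measure on `𝕋^d × ℝ^d` with finite
second moment whose first projection pushes to `μ₁` and `(x,v) ↦ x + π(v)` pushes to `μ₂`. -/
def IsTransferTd {d : ℕ} (γ : Measure (Td d × Rd d)) (μ₁ μ₂ : Measure (Td d)) : Prop :=
  IsProbabilityMeasure γ ∧ Integrable (fun p => ‖p.2‖ ^ 2) γ ∧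
  γ.map Prod.fst = μ₁ ∧ γ.map (fun p => p.1 + torusProj p.2) = μ₂

/-- `γ ∈ Ψ(μ₁,μ₂)` for measures on `ℝ^d`. -/
def IsTransferRd {d : ℕ} (γ : Measure (Rd d × Rd d)) (μ₁ μ₂ : Measure (Rd d)) : Prop :=
  IsProbabilityMeasure γ ∧ Integrable (fun p => ‖p.2‖ ^ 2) γ ∧
  γ.map Prod.fst = μ₁ ∧ γ.map (fun p => p.1 + p.2) = μ₂

/-- Strong differentiability of `G : 𝓟(𝕋^d) → ℝ` at `μ` with strong derivative `ξ`. -/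
def HasStrongDerivTd {d : ℕ} (G : Measure (Td d) → ℝ) (μ : Measure (Td d))
    (ξ : Td d → Rd d) : Prop :=
  MemLp ξ 2 μ ∧ ∃ k > (0:ℝ), ∀ ν : Measure (Td d), IsProbabilityMeasure ν →
    ∀ γ : Measure (Td d × Rd d), IsTransferTd γ μ ν →
      abs (G ν - G μ - ∫ p, ⟪ξ p.1, p.2⟫ ∂γ) ≤ k * ∫ p, ‖p.2‖ ^ 2 ∂γ

/-- Strong differentiability of `Ḡ : 𝓟₂(ℝ^d) → ℝ` at `μ` with strong derivative `ξ`. -/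
def HasStrongDerivRd {d : ℕ} (G : Measure (Rd d) → ℝ) (μ : Measure (Rd d))
    (ξ : Rd d → Rd d) : Prop :=
  MemLp ξ 2 μ ∧ ∃ k > (0:ℝ), ∀ ν : Measure (Rd d), IsProb2 ν →
    ∀ γ : Measure (Rd d × Rd d), IsTransferRd γ μ ν →
      abs (G ν - G μ - ∫ p, ⟪ξ p.1, p.2⟫ ∂γ) ≤ k * ∫ p, ‖p.2‖ ^ 2 ∂γ

/-- The one-particle action, given the motion `pack` of the whole community. -/
def oneAction {d : ℕ} (D : GoodData d) (t : ℝ) (pack : ℝ → Mspace d) (y y' : ℝ → Rd d) : ℝ :=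
  (∫ s in t..0, ((1:ℝ)/2 * ‖y' s‖ ^ 2 - Fhat D (y s) (pack s))) + u0hat D (y 0) (pack 0)

/-- The one-particle value function, given the motion `pack` of the whole community.
Curves on the torus are identified with their lifts to `ℝ^d`, the integrand being
`ℤ^d`-periodic in the space variable. -/
def uval {d : ℕ} (D : GoodData d) (pack : ℝ → Mspace d) (t : ℝ) (x : Rd d) : ℝ :=
  sInf {A | ∃ y y' : ℝ → Rd d, IsACOn t 0 y y' ∧ y t = x ∧ A = oneAction D t pack y y'}

/-- The one-particle minimality predicate. -/
def IsOneMinimizer {d : ℕ} (D : GoodData d) (t : ℝ) (pack : ℝ → Mspace d) (x : Rd d)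
    (y y' : ℝ → Rd d) : Prop :=
  IsACOn t 0 y y' ∧ y t = x ∧
  ∀ z z' : ℝ → Rd d, IsACOn t 0 z z' → z t = x →
    oneAction D t pack y y' ≤ oneAction D t pack z z'

/-- `σ` (of class `C¹` on `[−T,0]`, with derivatives `σ', σ''`) solves the Euler–Lagrange
system (3.9): `σ̈ₛ(x) = −∇F̂(σₛ(x),σₛ)`, `σ_t = ψ`, `σ̇₀(x) = −∇û₀(σ₀(x),σ₀)`. -/
def SolvesEL {d : ℕ} (D : GoodData d) (T t : ℝ) (ψ : Mspace d) (σ σ' σ'' : ℝ → Mspace d) : Prop :=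
  (∀ s ∈ Icc (-T) (0:ℝ), HasDerivWithinAt σ (σ' s) (Icc (-T) 0) s) ∧
  (∀ s ∈ Icc (-T) (0:ℝ), HasDerivWithinAt σ' (σ'' s) (Icc (-T) 0) s) ∧
  (∀ s ∈ Icc (-T) (0:ℝ), ∀ᵐ x ∂(cubeMeasure d),
    (σ'' s) x = - gradient (fun q => Fhat D q (σ s)) ((σ s) x)) ∧
  σ t = ψ ∧
  (∀ᵐ x ∂(cubeMeasure d), (σ' 0) x = - gradient (fun q => u0hat D q (σ 0)) ((σ 0) x))

/-- The weak formulation of the continuity equation `∂ₛμₛ + div(X μₛ) = 0` on `(t,0) × 𝕋^d`,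
tested against smooth functions, compactly supported in time, identified with their
`ℤ^d`-periodic lifts in the space variable. -/
def IsWeakSolutionCE {d : ℕ} (t : ℝ) (μ : ℝ → Measure (Td d)) (X : ℝ → Td d → Rd d) : Prop :=
  ∀ f : ℝ × Rd d → ℝ, ContDiff ℝ (⊤ : ℕ∞) f →
    (∀ (s : ℝ) (v : Rd d) (z : Fin d → ℤ), f (s, v + intVec z) = f (s, v)) →
    (∃ a b : ℝ, t < a ∧ a ≤ b ∧ b < 0 ∧ ∀ s, s ∉ Icc a b → ∀ v, f (s, v) = 0) →
    ∫ s in t..0, ∫ q, (deriv (fun τ => f (τ, liftTd q)) s +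
      ⟪gradient (fun v => f (s, v)) (liftTd q), X s q⟫) ∂(μ s) = 0

/-- `𝓕(μ) = ½∫∫ φ(z−z′) dμ dμ` on `𝓟(𝕋^d)`. -/
def FcalMeas {d : ℕ} (D : GoodData d) (μ : Measure (Td d)) : ℝ :=
  (1/2) * ∫ z, (∫ z', D.φ (liftTd z - liftTd z') ∂μ) ∂μ

/-- `𝓤₀(μ) = ∫∫ [U⁰(z) + ½U¹(z−z′)] dμ dμ` on `𝓟(𝕋^d)`. -/
def U0calMeas {d : ℕ} (D : GoodData d) (μ : Measure (Td d)) : ℝ :=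
  ∫ z, (D.U0 (liftTd z) + (1/2) * ∫ z', D.U1 (liftTd z - liftTd z') ∂μ) ∂μ

/-- The value function `𝓤(t,μ̄)` on measures. -/
def UcalMeas {d : ℕ} (D : GoodData d) (t : ℝ) (μbar : Measure (Td d)) : ℝ :=
  sInf {A | ∃ (μ : ℝ → Measure (Td d)) (X : ℝ → Td d → Rd d),
    (∀ s, IsProbabilityMeasure (μ s)) ∧
    IsWeakSolutionCE t μ X ∧ μ t = μbar ∧
    IntervalIntegrable (fun s => ∫ q, ‖X s q‖ ^ 2 ∂(μ s)) volume t 0 ∧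
    A = (∫ s in t..0, ((1:ℝ)/2 * ∫ q, ‖X s q‖ ^ 2 ∂(μ s) - FcalMeas D (μ s))) +
      U0calMeas D (μ 0)}


/-- Encoding of the Hilbert space `H¹_M(t,0)` as the isometric product `M × L²((t,0),M)`:
an `H¹` curve corresponds to the pair (initial value, derivative), the `H¹` norm
`‖σ_t‖²_M + ∫_t^0 ‖σ̇_s‖²_M ds` being exactly the product Hilbert norm squared. -/
abbrev H1on (d : ℕ) (t : ℝ) :=
  Mspace d × (Lp (α := ℝ) (Mspace d) 2 (volume.restrict (Ioc t (0:ℝ))))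

/-- The curve associated to an element of `H¹_M(t,0)`: `σ_s = σ_t + ∫_t^s σ̇_u du`. -/
def curveOf {d : ℕ} (t : ℝ) (p : H1on d t) : ℝ → Mspace d :=
  fun s => p.1 + ∫ u in t..s, p.2 u

/-- The augmented action as a functional on `H¹_M(t,0)`. -/
def Ifun {d : ℕ} (D : GoodData d) (t : ℝ) (p : H1on d t) : ℝ :=
  (∫ s in t..0, ((1:ℝ)/2 * ‖(p.2 : ℝ → Mspace d) s‖ ^ 2 - Fcal D (curveOf t p s)))
    + U0cal D (curveOf t p 0)



-- ### Auxiliary development ###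
-- § basic
lemma norm_le_of_coords {d : ℕ} {y : Rd d} (hy : ∀ i, |y i| ≤ 1) : ‖y‖ ≤ d := by
  rw [EuclideanSpace.norm_eq]
  have h1 : ∑ i : Fin d, ‖y i‖ ^ 2 ≤ (d : ℝ) ^ 2 := by
    calc ∑ i : Fin d, ‖y i‖ ^ 2 ≤ ∑ _i : Fin d, (1:ℝ) := by
          apply Finset.sum_le_sum; intro i _
          have := hy i; rw [Real.norm_eq_abs]; nlinarith [abs_nonneg (y i)]
      _ = (d : ℝ) := by simp
      _ ≤ (d : ℝ) ^ 2 := by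
          rcases Nat.eq_zero_or_pos d with h | h
          · simp [h]
          · have : (1:ℝ) ≤ d := by exact_mod_cast h
            nlinarith
  calc √(∑ i : Fin d, ‖y i‖ ^ 2) ≤ √((d:ℝ)^2) := Real.sqrt_le_sqrt h1
    _ = d := Real.sqrt_sq (by positivity)

instance cubeFinite (d : ℕ) : IsFiniteMeasure (cubeMeasure d) := by
  constructor
  rw [cubeMeasure, Measure.restrict_apply_univ]
  refine lt_of_le_of_lt (measure_mono ?_) (measure_closedBall_lt_top (x := (0:Rd d)) (r := d))
  intro x hx
  simp only [Metric.mem_closedBall, dist_zero_right]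
  exact norm_le_of_coords fun i => by
    have := hx i; rw [abs_le]; constructor <;> nlinarith [this.1, this.2]

lemma intVec_apply {d : ℕ} (z : Fin d → ℤ) (i : Fin d) : intVec z i = (z i : ℝ) := rfl

lemma periodic_reduce {d : ℕ} (x : Rd d) :
    ∃ y : Rd d, (∀ i, |y i| ≤ 1) ∧ ∃ z : Fin d → ℤ, x = y + intVec z := by
  refine ⟨(EuclideanSpace.equiv (Fin d) ℝ).symm (fun i => Int.fract (x i)), ?_, fun i => ⌊x i⌋, ?_⟩
  · intro i
    have h1 := Int.fract_nonneg (x i)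
    have h2 := Int.fract_lt_one (x i)
    rw [abs_le]
    constructor <;> simp [EuclideanSpace.equiv] <;> nlinarith
  · ext i
    simp only [PiLp.add_apply, intVec_apply]
    show x i = Int.fract (x i) + (⌊x i⌋ : ℝ)
    rw [Int.fract_add_floor]

lemma bounded_of_periodic {d : ℕ} {f : Rd d → ℝ} (hf : Continuous f) (hp : IsPeriodicRd f) :
    ∃ B : ℝ, 0 ≤ B ∧ ∀ x, |f x| ≤ B := by
  obtain ⟨C, hC⟩ := (isCompact_closedBall (0 : Rd d) d).exists_bound_of_continuousOn
    hf.continuousOn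
  refine ⟨max C 0, le_max_right _ _, fun x => ?_⟩
  obtain ⟨y, hy, z, rfl⟩ := periodic_reduce x
  rw [hp y z]
  have : y ∈ Metric.closedBall (0 : Rd d) d := by
    simp only [Metric.mem_closedBall, dist_zero_right]; exact norm_le_of_coords hy
  exact le_trans (by simpa using hC y this) (le_max_left _ _)

lemma fderiv_periodic {d : ℕ} {f : Rd d → ℝ} (hf : ContDiff ℝ 1 f) (hp : IsPeriodicRd f)
    (x : Rd d) (z : Fin d → ℤ) : fderiv ℝ f (x + intVec z) = fderiv ℝ f x := by
  have h1 : HasFDerivAt f (fderiv ℝ f (x + intVec z)) (x + intVec z) :=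
    (hf.differentiable one_ne_zero (x + intVec z)).hasFDerivAt
  have h2 : HasFDerivAt (fun y => f (y + intVec z)) (fderiv ℝ f (x + intVec z)) x := by
    have := h1.comp x ((hasFDerivAt_id x).add_const (intVec z))
    exact this
  have h3 : (fun y => f (y + intVec z)) = f := funext fun y => hp y z
  rw [h3] at h2
  exact (h2.fderiv).symm

lemma lipschitz_of_periodic {d : ℕ} {f : Rd d → ℝ} (hf : ContDiff ℝ 1 f) (hp : IsPeriodicRd f) :
    ∃ L : ℝ, 0 ≤ L ∧ ∀ a b, |f a - f b| ≤ L * ‖a - b‖ := by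
  obtain ⟨C, hC⟩ := (isCompact_closedBall (0 : Rd d) d).exists_bound_of_continuousOn
    ((hf.continuous_fderiv one_ne_zero).continuousOn)
  have hCb : ∀ x, ‖fderiv ℝ f x‖ ≤ max C 0 := by
    intro x
    obtain ⟨y, hy, z, rfl⟩ := periodic_reduce x
    have hyz : fderiv ℝ f (y + intVec z) = fderiv ℝ f y := fderiv_periodic hf hp y z
    rw [hyz]
    refine le_trans (hC y ?_) (le_max_left _ _)
    simp only [Metric.mem_closedBall, dist_zero_right]; exact norm_le_of_coords hy
  refine ⟨max C 0, le_max_right _ _, fun a b => ?_⟩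
  have := Convex.norm_image_sub_le_of_norm_fderiv_le (𝕜 := ℝ) (f := f) (s := univ)
    (fun x _ => (hf.differentiable one_ne_zero x)) (fun x _ => hCb x) convex_univ
    (mem_univ b) (mem_univ a)
  simpa [Real.norm_eq_abs] using this

/-- total mass of the cube measure -/
def mass (d : ℕ) : ℝ := (cubeMeasure d univ).toReal

lemma mass_nonneg (d : ℕ) : 0 ≤ mass d := ENNReal.toReal_nonneg

lemma integrable_of_bounded {d : ℕ} {E : Type*} [NormedAddCommGroup E] {f : Rd d → E}
    (hm : AEStronglyMeasurable f (cubeMeasure d)) {C : ℝ} (h : ∀ x, ‖f x‖ ≤ C) :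
    Integrable f (cubeMeasure d) :=
  Integrable.mono' (integrable_const C) hm (ae_of_all _ h)

lemma abs_integral_le {d : ℕ} {f : Rd d → ℝ} {C : ℝ} (hbd : ∀ x, |f x| ≤ C) :
    |∫ x, f x ∂(cubeMeasure d)| ≤ C * mass d := by
  have := norm_integral_le_of_norm_le_const (μ := cubeMeasure d) (f := f) (C := C)
    (ae_of_all _ fun x => by simpa [Real.norm_eq_abs] using hbd x)
  simpa [Real.norm_eq_abs, mass, Measure.real] using this

lemma normsq_integrable {d : ℕ} (σ : Mspace d) :
    Integrable (fun x => ‖σ x‖ ^ 2) (cubeMeasure d) := by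
  exact (L2.integrable_inner (𝕜 := ℝ) σ σ).congr
    (ae_of_all _ fun x => real_inner_self_eq_norm_sq _)

lemma normsq_eq {d : ℕ} (σ : Mspace d) :
    ∫ x, ‖σ x‖ ^ 2 ∂(cubeMeasure d) = ‖σ‖ ^ 2 := by
  have h := L2.inner_def (𝕜 := ℝ) σ σ
  rw [real_inner_self_eq_norm_sq] at h
  rw [h]
  exact integral_congr_ae (ae_of_all _ fun x => (real_inner_self_eq_norm_sq _).symm)

/-- the `L¹`-distance between two elements of `M`. -/
def J {d : ℕ} (σ τ : Mspace d) : ℝ := ∫ x, ‖σ x - τ x‖ ∂(cubeMeasure d)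

lemma J_nonneg {d : ℕ} (σ τ : Mspace d) : 0 ≤ J σ τ :=
  integral_nonneg fun x => norm_nonneg _

lemma sub_apply_ae {d : ℕ} (σ τ : Mspace d) :
    ∀ᵐ x ∂(cubeMeasure d), (σ - τ) x = σ x - τ x := Lp.coeFn_sub σ τ

lemma normsq_sub_integrable {d : ℕ} (σ τ : Mspace d) :
    Integrable (fun x => ‖σ x - τ x‖ ^ 2) (cubeMeasure d) := by
  refine (normsq_integrable (σ - τ)).congr ?_
  filter_upwards [sub_apply_ae σ τ] with x hx
  rw [hx]

lemma integrable_norm_sub {d : ℕ} (σ τ : Mspace d) :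
    Integrable (fun x => ‖σ x - τ x‖) (cubeMeasure d) := by
  refine Integrable.mono' (((normsq_sub_integrable σ τ).add (integrable_const 1)).div_const 2)
    (((Lp.aestronglyMeasurable σ).sub (Lp.aestronglyMeasurable τ)).norm) (ae_of_all _ fun x => ?_)
  simp only [Pi.add_apply]
  rw [norm_norm]
  nlinarith [sq_nonneg (‖σ x - τ x‖ - 1), norm_nonneg (σ x - τ x)]

lemma normsq_sub_eq {d : ℕ} (σ τ : Mspace d) :
    ∫ x, ‖σ x - τ x‖ ^ 2 ∂(cubeMeasure d) = ‖σ - τ‖ ^ 2 := by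
  rw [← normsq_eq (σ - τ)]
  refine integral_congr_ae ?_
  filter_upwards [sub_apply_ae σ τ] with x hx
  rw [hx]

lemma J_le {d : ℕ} (σ τ : Mspace d) {δ : ℝ} (hδ : 0 < δ) :
    J σ τ ≤ (δ * ‖σ - τ‖ ^ 2 + mass d / δ) / 2 := by
  have hpt : ∀ x : Rd d, ‖σ x - τ x‖ ≤ (δ * ‖σ x - τ x‖ ^ 2 + 1 / δ) / 2 := by
    intro x
    nlinarith [sq_nonneg (δ * ‖σ x - τ x‖ - 1), norm_nonneg (σ x - τ x), hδ,
      mul_one_div_cancel hδ.ne']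
  have hint : Integrable (fun x => (δ * ‖σ x - τ x‖ ^ 2 + 1 / δ) / 2) (cubeMeasure d) :=
    (((normsq_sub_integrable σ τ).const_mul δ).add (integrable_const _)).div_const 2
  calc J σ τ ≤ ∫ x, (δ * ‖σ x - τ x‖ ^ 2 + 1 / δ) / 2 ∂(cubeMeasure d) :=
        integral_mono (integrable_norm_sub σ τ) hint hpt
    _ = (δ * ‖σ - τ‖ ^ 2 + mass d / δ) / 2 := by
        rw [integral_div, integral_add ((normsq_sub_integrable σ τ).const_mul δ)
          (integrable_const _), integral_const_mul, normsq_sub_eq, integral_const]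
        simp [mass, smul_eq_mul, Measure.real]
        ring

lemma J_le_norm {d : ℕ} (σ τ : Mspace d) : J σ τ ≤ Real.sqrt (mass d) * ‖σ - τ‖ := by
  set c := σ - τ with hc
  have hmem : MemLp (fun x => ‖c x‖) 2 (cubeMeasure d) := (Lp.memLp c).norm
  have hone : MemLp (fun _ : Rd d => (1:ℝ)) 2 (cubeMeasure d) := memLp_const 1
  set F := hmem.toLp _ with hF
  set G := hone.toLp _ with hG
  have hkey : J σ τ = ⟪G, F⟫ := by
    rw [L2.inner_def]
    refine integral_congr_ae ?_
    filter_upwards [hmem.coeFn_toLp, hone.coeFn_toLp, sub_apply_ae σ τ] with x h1 h2 h3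
    show ‖σ x - τ x‖ = inner ℝ (G x) (F x)
    rw [RCLike.inner_apply, conj_trivial, mul_comm]
    rw [h1, h2, ← h3, one_mul]
  have hG2 : ‖G‖ ^ 2 = mass d := by
    have h := L2.inner_def (𝕜 := ℝ) G G
    rw [real_inner_self_eq_norm_sq] at h
    rw [h]
    have : ∫ x, (inner ℝ (G x) (G x) : ℝ) ∂(cubeMeasure d) = ∫ _x, (1:ℝ) ∂(cubeMeasure d) := by
      refine integral_congr_ae ?_
      filter_upwards [hone.coeFn_toLp] with x h1
      rw [RCLike.inner_apply, conj_trivial]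
      rw [h1]; norm_num
    rw [this, integral_const, smul_eq_mul, mul_one, mass, Measure.real]
  have hF2 : ‖F‖ ^ 2 = ‖c‖ ^ 2 := by
    have h := L2.inner_def (𝕜 := ℝ) F F
    rw [real_inner_self_eq_norm_sq] at h
    rw [h]
    have : ∫ x, (inner ℝ (F x) (F x) : ℝ) ∂(cubeMeasure d) = ∫ x, ‖c x‖ ^ 2 ∂(cubeMeasure d) := by
      refine integral_congr_ae ?_
      filter_upwards [hmem.coeFn_toLp] with x h1
      rw [RCLike.inner_apply, conj_trivial]
      rw [h1]; ring
    rw [this, normsq_eq]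
  have hGn : ‖G‖ = Real.sqrt (mass d) := by
    rw [← hG2, Real.sqrt_sq (norm_nonneg _)]
  have hFn : ‖F‖ = ‖c‖ := by
    have h1 : ‖F‖ = Real.sqrt (‖F‖ ^ 2) := (Real.sqrt_sq (norm_nonneg _)).symm
    rw [h1, hF2, Real.sqrt_sq (norm_nonneg _)]
  calc J σ τ = ⟪G, F⟫ := hkey
    _ ≤ ‖G‖ * ‖F‖ := real_inner_le_norm G F
    _ = Real.sqrt (mass d) * ‖σ - τ‖ := by rw [hGn, hFn]


/-- `Gone g σ q = ∫ g(q - σ(y)) dy`. -/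
def Gone (g : Rd d → ℝ) (σ : Mspace d) (q : Rd d) : ℝ := ∫ y, g (q - σ y) ∂(cubeMeasure d)

variable {g : Rd d → ℝ} {B L : ℝ}

lemma integrable_g_comp (hc : Continuous g) (hB : ∀ v, |g v| ≤ B) {f : Rd d → Rd d}
    (hf : AEStronglyMeasurable f (cubeMeasure d)) :
    Integrable (fun y => g (f y)) (cubeMeasure d) :=
  integrable_of_bounded (hc.comp_aestronglyMeasurable hf)
    (fun x => by rw [Real.norm_eq_abs]; exact hB _)

lemma integrable_inner' (hc : Continuous g) (hB : ∀ v, |g v| ≤ B) (σ : Mspace d) (q : Rd d) :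
    Integrable (fun y => g (q - σ y)) (cubeMeasure d) :=
  integrable_g_comp hc hB (aestronglyMeasurable_const.sub (Lp.aestronglyMeasurable σ))

lemma abs_Gone_le (hB : ∀ v, |g v| ≤ B) (σ : Mspace d) (q : Rd d) :
    |Gone g σ q| ≤ B * mass d :=
  abs_integral_le fun y => hB _

lemma Gone_lip (hc : Continuous g) (hB : ∀ v, |g v| ≤ B)
    (hL : ∀ a b, |g a - g b| ≤ L * ‖a - b‖) (σ : Mspace d) (q q' : Rd d) :
    |Gone g σ q - Gone g σ q'| ≤ L * mass d * ‖q - q'‖ := by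
  rw [Gone, Gone, ← integral_sub (integrable_inner' hc hB σ q) (integrable_inner' hc hB σ q')]
  have : ∀ y : Rd d, |g (q - σ y) - g (q' - σ y)| ≤ L * ‖q - q'‖ := by
    intro y
    have := hL (q - σ y) (q' - σ y)
    rwa [sub_sub_sub_cancel_right] at this
  calc |∫ y, (g (q - σ y) - g (q' - σ y)) ∂(cubeMeasure d)| ≤ (L * ‖q - q'‖) * mass d :=
        abs_integral_le this
    _ = L * mass d * ‖q - q'‖ := by ring

lemma Gone_sub (hc : Continuous g) (hB : ∀ v, |g v| ≤ B)
    (hL : ∀ a b, |g a - g b| ≤ L * ‖a - b‖) (σ τ : Mspace d) (q : Rd d) :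
    |Gone g σ q - Gone g τ q| ≤ L * J σ τ := by
  rw [Gone, Gone, ← integral_sub (integrable_inner' hc hB σ q) (integrable_inner' hc hB τ q)]
  calc |∫ y, (g (q - σ y) - g (q - τ y)) ∂(cubeMeasure d)|
      ≤ ∫ y, |g (q - σ y) - g (q - τ y)| ∂(cubeMeasure d) := by
        simpa [Real.norm_eq_abs] using norm_integral_le_integral_norm
          (f := fun y => g (q - σ y) - g (q - τ y)) (μ := cubeMeasure d)
    _ ≤ ∫ y, L * ‖σ y - τ y‖ ∂(cubeMeasure d) := by
        refine integral_mono (((integrable_inner' hc hB σ q).sub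
          (integrable_inner' hc hB τ q)).abs) ((integrable_norm_sub σ τ).const_mul L) ?_
        intro y
        have := hL (q - σ y) (q - τ y)
        rwa [sub_sub_sub_cancel_left, norm_sub_rev (τ y)] at this
    _ = L * J σ τ := integral_const_mul L _

lemma Gone_continuous (hc : Continuous g) (hB : ∀ v, |g v| ≤ B)
    (hL : ∀ a b, |g a - g b| ≤ L * ‖a - b‖) (hL0 : 0 ≤ L) (σ : Mspace d) :
    Continuous (Gone g σ) := by
  refine (LipschitzWith.of_dist_le_mul (K := Real.toNNReal (L * mass d)) ?_).continuous
  intro q q'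
  rw [Real.dist_eq, dist_eq_norm, Real.coe_toNNReal _ (mul_nonneg hL0 (mass_nonneg d))]
  exact Gone_lip hc hB hL σ q q'

lemma integrable_Gone_comp (hc : Continuous g) (hB : ∀ v, |g v| ≤ B)
    (hL : ∀ a b, |g a - g b| ≤ L * ‖a - b‖) (hL0 : 0 ≤ L) (σ τ : Mspace d) :
    Integrable (fun x => Gone g σ (τ x)) (cubeMeasure d) :=
  integrable_of_bounded ((Gone_continuous hc hB hL hL0 σ).comp_aestronglyMeasurable
    (Lp.aestronglyMeasurable τ))
    (fun x => by rw [Real.norm_eq_abs]; exact abs_Gone_le hB σ _)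

/-- the double integral `∫∫ g(σ(x) − σ(y)) dx dy`. -/
def Wd (g : Rd d → ℝ) (σ : Mspace d) : ℝ := ∫ x, Gone g σ (σ x) ∂(cubeMeasure d)

lemma abs_Wd_le (hB : ∀ v, |g v| ≤ B) (σ : Mspace d) :
    |Wd g σ| ≤ B * mass d * mass d := by
  refine le_trans (abs_integral_le fun x => abs_Gone_le hB σ (σ x)) le_rfl

lemma Wd_diff (hc : Continuous g) (hB : ∀ v, |g v| ≤ B)
    (hL : ∀ a b, |g a - g b| ≤ L * ‖a - b‖) (hL0 : 0 ≤ L) (σ τ : Mspace d) :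
    |Wd g σ - Wd g τ| ≤ 2 * L * mass d * J σ τ := by
  rw [Wd, Wd, ← integral_sub (integrable_Gone_comp hc hB hL hL0 σ σ)
    (integrable_Gone_comp hc hB hL hL0 τ τ)]
  calc |∫ x, (Gone g σ (σ x) - Gone g τ (τ x)) ∂(cubeMeasure d)|
      ≤ ∫ x, |Gone g σ (σ x) - Gone g τ (τ x)| ∂(cubeMeasure d) := by
        simpa [Real.norm_eq_abs] using norm_integral_le_integral_norm
          (f := fun x => Gone g σ (σ x) - Gone g τ (τ x)) (μ := cubeMeasure d)
    _ ≤ ∫ x, (L * mass d * ‖σ x - τ x‖ + L * J σ τ) ∂(cubeMeasure d) := by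
        refine integral_mono (((integrable_Gone_comp hc hB hL hL0 σ σ).sub
          (integrable_Gone_comp hc hB hL hL0 τ τ)).abs)
          (((integrable_norm_sub σ τ).const_mul (L * mass d)).add (integrable_const _)) ?_
        intro x
        calc |Gone g σ (σ x) - Gone g τ (τ x)|
            ≤ |Gone g σ (σ x) - Gone g σ (τ x)| + |Gone g σ (τ x) - Gone g τ (τ x)| :=
              abs_sub_le _ _ _
          _ ≤ L * mass d * ‖σ x - τ x‖ + L * J σ τ :=
              add_le_add (Gone_lip hc hB hL σ _ _) (Gone_sub hc hB hL σ τ _)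
    _ = L * mass d * J σ τ + L * J σ τ * mass d := by
        rw [integral_add (((integrable_norm_sub σ τ).const_mul (L * mass d)))
          (integrable_const _), integral_const_mul, integral_const]
        simp [J, mass, smul_eq_mul, Measure.real]; ring
    _ ≤ 2 * L * mass d * J σ τ := by nlinarith [J_nonneg σ τ, mass_nonneg d]

variable {d : ℕ}

/-- Bundled bounds for the data. -/
structure Bounds (d : ℕ) (D : GoodData d) where
  Bφ : ℝ
  B0 : ℝ
  B1 : ℝ
  Lφ : ℝ
  L0 : ℝ
  L1 : ℝ
  Bφ_nonneg : 0 ≤ Bφ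
  B0_nonneg : 0 ≤ B0
  B1_nonneg : 0 ≤ B1
  Lφ_nonneg : 0 ≤ Lφ
  L0_nonneg : 0 ≤ L0
  L1_nonneg : 0 ≤ L1
  hBφ : ∀ v, |D.φ v| ≤ Bφ
  hB0 : ∀ v, |D.U0 v| ≤ B0
  hB1 : ∀ v, |D.U1 v| ≤ B1
  hLφ : ∀ a b, |D.φ a - D.φ b| ≤ Lφ * ‖a - b‖
  hL0 : ∀ a b, |D.U0 a - D.U0 b| ≤ L0 * ‖a - b‖
  hL1 : ∀ a b, |D.U1 a - D.U1 b| ≤ L1 * ‖a - b‖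

lemma exists_bounds (d : ℕ) (D : GoodData d) : Nonempty (Bounds d D) := by
  obtain ⟨Bφ, hBφ0, hBφ⟩ := bounded_of_periodic D.φ_smooth.continuous D.φ_periodic
  obtain ⟨B0, hB00, hB0⟩ := bounded_of_periodic D.U0_smooth.continuous D.U0_periodic
  obtain ⟨B1, hB10, hB1⟩ := bounded_of_periodic D.U1_smooth.continuous D.U1_periodic
  obtain ⟨Lφ, hLφ0, hLφ⟩ := lipschitz_of_periodic (D.φ_smooth.of_le (by norm_num)) D.φ_periodic
  obtain ⟨L0, hL00, hL0⟩ := lipschitz_of_periodic (D.U0_smooth.of_le (by norm_num)) D.U0_periodic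
  obtain ⟨L1, hL10, hL1⟩ := lipschitz_of_periodic (D.U1_smooth.of_le (by norm_num)) D.U1_periodic
  exact ⟨⟨Bφ, B0, B1, Lφ, L0, L1, hBφ0, hB00, hB10, hLφ0, hL00, hL10,
    hBφ, hB0, hB1, hLφ, hL0, hL1⟩⟩

variable {D : GoodData d}

/-- Bound for `|Fcal|`. -/
def Bounds.BF (c : Bounds d D) : ℝ := c.Bφ * mass d * mass d / 2
/-- Bound for `|U0cal|`. -/
def Bounds.BU (c : Bounds d D) : ℝ := (c.B0 + c.B1 * mass d / 2) * mass d
/-- `J`-Lipschitz constant of `Fcal`. -/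
def Bounds.KF (c : Bounds d D) : ℝ := c.Lφ * mass d
/-- `J`-Lipschitz constant of `U0cal`. -/
def Bounds.KU (c : Bounds d D) : ℝ := c.L0 + c.L1 * mass d

lemma Bounds.BF_nonneg (c : Bounds d D) : 0 ≤ c.BF := by
  have := c.Bφ_nonneg; have := mass_nonneg d; unfold Bounds.BF; positivity
lemma Bounds.BU_nonneg (c : Bounds d D) : 0 ≤ c.BU := by
  have := c.B0_nonneg; have := c.B1_nonneg; have := mass_nonneg d; unfold Bounds.BU; positivity
lemma Bounds.KF_nonneg (c : Bounds d D) : 0 ≤ c.KF :=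
  mul_nonneg c.Lφ_nonneg (mass_nonneg d)
lemma Bounds.KU_nonneg (c : Bounds d D) : 0 ≤ c.KU :=
  add_nonneg c.L0_nonneg (mul_nonneg c.L1_nonneg (mass_nonneg d))

lemma Fcal_eq (σ : Mspace d) : Fcal D σ = (1/2) * Wd D.φ σ := rfl

lemma abs_Fcal_le (c : Bounds d D) (σ : Mspace d) : |Fcal D σ| ≤ c.BF := by
  rw [Fcal_eq, abs_mul]
  have := abs_Wd_le c.hBφ σ
  rw [Bounds.BF]
  rw [abs_of_pos (by norm_num : (0:ℝ) < 1/2)]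
  linarith

lemma Fcal_diff (c : Bounds d D) (σ τ : Mspace d) :
    |Fcal D σ - Fcal D τ| ≤ c.KF * J σ τ := by
  rw [Fcal_eq, Fcal_eq, ← mul_sub, abs_mul, abs_of_pos (by norm_num : (0:ℝ) < 1/2)]
  have := Wd_diff D.φ_smooth.continuous c.hBφ c.hLφ c.Lφ_nonneg σ τ
  rw [Bounds.KF]
  linarith

lemma U0cal_eq (σ : Mspace d) :
    U0cal D σ = ∫ x, (D.U0 (σ x) + (1/2) * Gone D.U1 σ (σ x)) ∂(cubeMeasure d) := rfl

lemma integrable_U0cal_integrand (c : Bounds d D) (σ : Mspace d) :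
    Integrable (fun x => D.U0 (σ x) + (1/2) * Gone D.U1 σ (σ x)) (cubeMeasure d) :=
  (integrable_g_comp D.U0_smooth.continuous c.hB0 (Lp.aestronglyMeasurable σ)).add
    ((integrable_Gone_comp D.U1_smooth.continuous c.hB1 c.hL1 c.L1_nonneg σ σ).const_mul _)

lemma abs_U0cal_le (c : Bounds d D) (σ : Mspace d) : |U0cal D σ| ≤ c.BU := by
  rw [U0cal_eq, Bounds.BU]
  refine abs_integral_le fun x => ?_
  have h1 := c.hB0 (σ x)
  have h2 := abs_Gone_le c.hB1 σ (σ x)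
  have h3 := abs_add_le (D.U0 (σ x)) ((1/2) * Gone D.U1 σ (σ x))
  rw [abs_mul, abs_of_pos (by norm_num : (0:ℝ) < 1/2)] at h3
  linarith

lemma U0cal_diff (c : Bounds d D) (σ τ : Mspace d) :
    |U0cal D σ - U0cal D τ| ≤ c.KU * J σ τ := by
  rw [U0cal_eq, U0cal_eq,
    ← integral_sub (integrable_U0cal_integrand c σ) (integrable_U0cal_integrand c τ)]
  have key : ∀ x, |(D.U0 (σ x) + (1/2) * Gone D.U1 σ (σ x)) -
      (D.U0 (τ x) + (1/2) * Gone D.U1 τ (τ x))| ≤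
      (c.L0 + c.L1 * mass d / 2) * ‖σ x - τ x‖ + (c.L1 / 2) * J σ τ := by
    intro x
    have h1 := c.hL0 (σ x) (τ x)
    have h2 := Gone_lip D.U1_smooth.continuous c.hB1 c.hL1 σ (σ x) (τ x)
    have h3 := Gone_sub D.U1_smooth.continuous c.hB1 c.hL1 σ τ (τ x)
    have hABC := abs_sub_le (Gone D.U1 σ (σ x)) (Gone D.U1 σ (τ x)) (Gone D.U1 τ (τ x))
    have hX : (D.U0 (σ x) + (1/2) * Gone D.U1 σ (σ x)) -
        (D.U0 (τ x) + (1/2) * Gone D.U1 τ (τ x)) =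
        (D.U0 (σ x) - D.U0 (τ x)) + (1/2) * (Gone D.U1 σ (σ x) - Gone D.U1 τ (τ x)) := by ring
    rw [hX]
    refine le_trans (abs_add_le _ _) ?_
    rw [abs_mul, abs_of_pos (by norm_num : (0:ℝ) < 1/2)]
    linarith
  have hni := norm_integral_le_integral_norm (μ := cubeMeasure d)
    (f := fun x => (D.U0 (σ x) + (1/2) * Gone D.U1 σ (σ x)) -
      (D.U0 (τ x) + (1/2) * Gone D.U1 τ (τ x)))
  simp only [Real.norm_eq_abs] at hni
  refine le_trans (le_trans hni
    (integral_mono (((integrable_U0cal_integrand c σ).sub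
      (integrable_U0cal_integrand c τ)).abs)
      (((integrable_norm_sub σ τ).const_mul _).add (integrable_const _)) key)) ?_
  simp only [Pi.add_apply]
  rw [integral_add ((integrable_norm_sub σ τ).const_mul _) (integrable_const _),
    integral_const_mul, integral_const]
  have : (cubeMeasure d).real univ • ((c.L1 / 2) * J σ τ) = (c.L1 / 2) * J σ τ * mass d := by
    simp [mass, smul_eq_mul, Measure.real]; ring
  rw [this, Bounds.KU]
  have hJ : ∫ x, ‖σ x - τ x‖ ∂(cubeMeasure d) = J σ τ := rfl
  rw [hJ]
  nlinarith [J_nonneg σ τ, mass_nonneg d, c.L1_nonneg]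

lemma continuous_of_J_bound {F : Mspace d → ℝ} {K : ℝ} (hK : 0 ≤ K)
    (h : ∀ σ τ, |F σ - F τ| ≤ K * J σ τ) : Continuous F := by
  rw [Metric.continuous_iff]
  intro σ₀ ε hε
  set m := mass d with hm
  have hm0 : 0 ≤ m := mass_nonneg d
  set δ := (K * m + 1) / ε with hδdef
  have hδ : 0 < δ := by positivity
  set η := Real.sqrt (ε / (K * δ + 1)) with hηdef
  have hη : 0 < η := Real.sqrt_pos.mpr (by positivity)
  refine ⟨η, hη, fun τ hτ => ?_⟩
  have h1 : ‖τ - σ₀‖ < η := by rwa [← dist_eq_norm]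
  have hη2 : η ^ 2 = ε / (K * δ + 1) := Real.sq_sqrt (by positivity)
  have h2 : ‖τ - σ₀‖ ^ 2 < ε / (K * δ + 1) := by
    rw [← hη2]; exact pow_lt_pow_left₀ h1 (norm_nonneg _) (by norm_num)
  have e1 : K * δ * ‖τ - σ₀‖ ^ 2 < ε := by
    have hd : 0 < K * δ + 1 := by positivity
    have := mul_le_mul_of_nonneg_left h2.le (mul_nonneg hK hδ.le)
    have h3 : K * δ * (ε / (K * δ + 1)) < ε := by
      rw [mul_div_assoc', div_lt_iff₀ hd]
      nlinarith [mul_nonneg hK hδ.le]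
    nlinarith [mul_nonneg hK hδ.le, sq_nonneg ‖τ - σ₀‖]
  have e2 : K * (m / δ) ≤ ε := by
    have hd : (0:ℝ) < K * m + 1 := by positivity
    rw [hδdef, div_div_eq_mul_div, mul_div_assoc', div_le_iff₀ hd]
    nlinarith [mul_nonneg hK hm0]
  have h4 := h τ σ₀
  have h5 := mul_le_mul_of_nonneg_left (J_le τ σ₀ hδ) hK
  rw [Real.dist_eq]
  calc |F τ - F σ₀| ≤ K * ((δ * ‖τ - σ₀‖ ^ 2 + m / δ) / 2) := le_trans h4 h5
    _ < ε := by nlinarith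

lemma continuous_Fcal (c : Bounds d D) : Continuous (Fcal D) :=
  continuous_of_J_bound c.KF_nonneg (Fcal_diff c)

lemma continuous_U0cal (c : Bounds d D) : Continuous (U0cal D) :=
  continuous_of_J_bound c.KU_nonneg (U0cal_diff c)

variable {D : GoodData d}

/-- The set of attainable action values. -/
def ASet (D : GoodData d) (t : ℝ) (ψ : Mspace d) : Set ℝ :=
  {A | ∃ σ σ' : ℝ → Mspace d, IsACOn t 0 σ σ' ∧ σ t = ψ ∧ A = action D t σ σ'}

lemma Uhat_eq_sInf (t : ℝ) (ψ : Mspace d) : Uhat D t ψ = sInf (ASet D t ψ) := rfl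

lemma isACOn_const (t : ℝ) (ψ : Mspace d) : IsACOn t 0 (fun _ => ψ) (fun _ => (0 : Mspace d)) := by
  refine ⟨intervalIntegrable_const, ?_, fun s _ => by simp⟩
  have : (fun s : ℝ => ‖(0 : Mspace d)‖ ^ 2) = fun _ => (0:ℝ) := by
    funext s; simp
  rw [this]
  exact intervalIntegrable_const

lemma ASet_nonempty (t : ℝ) (ψ : Mspace d) : (ASet D t ψ).Nonempty :=
  ⟨_, _, _, isACOn_const t ψ, rfl, rfl⟩

lemma IsACOn.continuousOn {t : ℝ} (ht : t ≤ 0) {σ σ' : ℝ → Mspace d}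
    (h : IsACOn t 0 σ σ') : ContinuousOn σ (Icc t 0) := by
  have h1 : IntegrableOn σ' (Icc t 0) volume := by
    have := h.1
    rwa [intervalIntegrable_iff_integrableOn_Icc_of_le ht] at this
  have h2 : ContinuousOn (fun s => σ t + ∫ u in t..s, σ' u) (Icc t 0) := by
    refine continuousOn_const.add ?_
    have := intervalIntegral.continuousOn_primitive_interval
      (f := σ') (a := t) (b := 0) (μ := volume) (by rwa [uIcc_of_le ht])
    rwa [uIcc_of_le ht] at this
  exact h2.congr h.2.2

lemma Fcal_comp_intervalIntegrable (c : Bounds d D) {t : ℝ} (ht : t ≤ 0) {σ σ' : ℝ → Mspace d}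
    (h : IsACOn t 0 σ σ') : IntervalIntegrable (fun s => Fcal D (σ s)) volume t 0 := by
  apply ContinuousOn.intervalIntegrable
  rw [uIcc_of_le ht]
  exact (continuous_Fcal c).comp_continuousOn (h.continuousOn ht)

lemma integrand_intervalIntegrable (c : Bounds d D) {t : ℝ} (ht : t ≤ 0) {σ σ' : ℝ → Mspace d}
    (h : IsACOn t 0 σ σ') :
    IntervalIntegrable (fun s => (1:ℝ)/2 * ‖σ' s‖ ^ 2 - Fcal D (σ s)) volume t 0 :=
  (h.2.1.const_mul _).sub (Fcal_comp_intervalIntegrable c ht h)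

lemma action_ge (c : Bounds d D) {t : ℝ} (ht : t ≤ 0) {σ σ' : ℝ → Mspace d}
    (h : IsACOn t 0 σ σ') : -((-t) * c.BF + c.BU) ≤ action D t σ σ' := by
  have h1 : ∫ s in t..0, (-c.BF : ℝ) ≤ ∫ s in t..0, ((1:ℝ)/2 * ‖σ' s‖ ^ 2 - Fcal D (σ s)) := by
    refine intervalIntegral.integral_mono_on ht intervalIntegrable_const
      (integrand_intervalIntegrable c ht h) fun s _ => ?_
    have := abs_Fcal_le c (σ s)
    have h2 : 0 ≤ (1:ℝ)/2 * ‖σ' s‖ ^ 2 := by positivity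
    rw [abs_le] at this
    linarith [this.1]
  rw [intervalIntegral.integral_const, smul_eq_mul] at h1
  have h3 := abs_U0cal_le c (σ 0)
  rw [abs_le] at h3
  rw [action]
  nlinarith [h3.1]

lemma ASet_bddBelow (c : Bounds d D) {t : ℝ} (ht : t ≤ 0) (ψ : Mspace d) :
    BddBelow (ASet D t ψ) := by
  refine ⟨-((-t) * c.BF + c.BU), fun A hA => ?_⟩
  obtain ⟨σ, σ', hAC, hψ, rfl⟩ := hA
  exact action_ge c ht hAC

lemma Uhat_le_action (c : Bounds d D) {t : ℝ} (ht : t ≤ 0) {ψ : Mspace d} {σ σ' : ℝ → Mspace d}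
    (h : IsACOn t 0 σ σ') (hψ : σ t = ψ) : Uhat D t ψ ≤ action D t σ σ' :=
  csInf_le (ASet_bddBelow c ht ψ) ⟨σ, σ', h, hψ, rfl⟩

lemma Uhat_ge (c : Bounds d D) {t : ℝ} (ht : t ≤ 0) (ψ : Mspace d) :
    -((-t) * c.BF + c.BU) ≤ Uhat D t ψ :=
  le_csInf (ASet_nonempty t ψ) fun A hA => by
    obtain ⟨σ, σ', hAC, hψ, rfl⟩ := hA; exact action_ge c ht hAC

lemma action_const_le (c : Bounds d D) {t : ℝ} (ht : t ≤ 0) (ψ : Mspace d) :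
    action D t (fun _ => ψ) (fun _ => (0:Mspace d)) ≤ (-t) * c.BF + c.BU := by
  rw [action]
  have h1 : (fun s : ℝ => (1:ℝ)/2 * ‖(0:Mspace d)‖ ^ 2 - Fcal D ψ) = fun _ => -Fcal D ψ := by
    funext s; simp
  rw [h1, intervalIntegral.integral_const, smul_eq_mul]
  have h2 := abs_Fcal_le c ψ
  have h3 := abs_U0cal_le c ψ
  rw [abs_le] at h2 h3
  nlinarith [h2.1, h2.2, h3.2]

lemma Uhat_le (c : Bounds d D) {t : ℝ} (ht : t ≤ 0) (ψ : Mspace d) :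
    Uhat D t ψ ≤ (-t) * c.BF + c.BU :=
  le_trans (Uhat_le_action c ht (isACOn_const t ψ) rfl) (action_const_le c ht ψ)

lemma exists_near_minimizer (c : Bounds d D) {t : ℝ} (ht : t ≤ 0) (ψ : Mspace d) {ε : ℝ}
    (hε : 0 < ε) : ∃ σ σ' : ℝ → Mspace d, IsACOn t 0 σ σ' ∧ σ t = ψ ∧
      action D t σ σ' < Uhat D t ψ + ε := by
  obtain ⟨A, hA, hlt⟩ := exists_lt_of_csInf_lt (ASet_nonempty t ψ)
    (show sInf (ASet D t ψ) < Uhat D t ψ + ε by rw [← Uhat_eq_sInf]; linarith)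
  obtain ⟨σ, σ', hAC, hψ, rfl⟩ := hA
  exact ⟨σ, σ', hAC, hψ, hlt⟩

lemma energy_bound (c : Bounds d D) {t : ℝ} (ht : t ≤ 0) {σ σ' : ℝ → Mspace d}
    (h : IsACOn t 0 σ σ') :
    ∫ s in t..0, ‖σ' s‖ ^ 2 ≤ 2 * (action D t σ σ' + (-t) * c.BF + c.BU) := by
  have hsplit : ∫ s in t..0, ((1:ℝ)/2 * ‖σ' s‖ ^ 2 - Fcal D (σ s)) =
      (∫ s in t..0, (1:ℝ)/2 * ‖σ' s‖ ^ 2) - ∫ s in t..0, Fcal D (σ s) :=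
    intervalIntegral.integral_sub (h.2.1.const_mul _) (Fcal_comp_intervalIntegrable c ht h)
  have hhalf : ∫ s in t..0, (1:ℝ)/2 * ‖σ' s‖ ^ 2 = (1/2) * ∫ s in t..0, ‖σ' s‖ ^ 2 :=
    intervalIntegral.integral_const_mul _ _
  have hF : ∫ s in t..0, Fcal D (σ s) ≤ (0 - t) * c.BF := by
    have := intervalIntegral.integral_mono_on ht (Fcal_comp_intervalIntegrable c ht h)
      intervalIntegrable_const (fun s _ => by
        have := abs_Fcal_le c (σ s); rw [abs_le] at this; exact this.2)
    rwa [intervalIntegral.integral_const, smul_eq_mul] at this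
  have hU := abs_U0cal_le c (σ 0)
  rw [abs_le] at hU
  have : action D t σ σ' = (1/2) * (∫ s in t..0, ‖σ' s‖ ^ 2) - (∫ s in t..0, Fcal D (σ s))
      + U0cal D (σ 0) := by rw [action, hsplit, hhalf]
  nlinarith [hU.1]

lemma norm_sub_le_energy (c : Bounds d D) {t' t : ℝ} (ht' : t' ≤ t) (ht : t ≤ 0)
    {σ σ' : ℝ → Mspace d} (h : IsACOn t' 0 σ σ') {δ : ℝ} (hδ : 0 < δ) :
    ‖σ t - σ t'‖ ≤ (δ * (∫ s in t'..0, ‖σ' s‖ ^ 2) + (t - t') / δ) / 2 := by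
  have hsub : uIcc t' t ⊆ uIcc t' 0 := by
    rw [uIcc_of_le ht', uIcc_of_le (le_trans ht' ht)]
    exact Icc_subset_Icc le_rfl ht
  have hmem : t ∈ Icc t' (0:ℝ) := ⟨ht', ht⟩
  have heq : σ t = σ t' + ∫ u in t'..t, σ' u := h.2.2 t hmem
  have h1 : ‖σ t - σ t'‖ = ‖∫ u in t'..t, σ' u‖ := by rw [heq]; simp
  have h2 : ‖∫ u in t'..t, σ' u‖ ≤ ∫ u in t'..t, ‖σ' u‖ :=
    intervalIntegral.norm_integral_le_integral_norm ht'
  have hIInorm : IntervalIntegrable (fun u => ‖σ' u‖) volume t' t :=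
    (h.1.norm).mono_set hsub
  have hIIsq : IntervalIntegrable (fun u => ‖σ' u‖ ^ 2) volume t' t :=
    h.2.1.mono_set hsub
  have h3 : ∫ u in t'..t, ‖σ' u‖ ≤ ∫ u in t'..t, (δ * ‖σ' u‖ ^ 2 + 1/δ) / 2 := by
    refine intervalIntegral.integral_mono_on ht' hIInorm
      (((hIIsq.const_mul _).add intervalIntegrable_const).div_const _) fun u _ => ?_
    nlinarith [sq_nonneg (δ * ‖σ' u‖ - 1), norm_nonneg (σ' u), hδ, mul_one_div_cancel hδ.ne']
  have h4 : ∫ u in t'..t, (δ * ‖σ' u‖ ^ 2 + 1/δ) / 2 =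
      (δ * (∫ u in t'..t, ‖σ' u‖ ^ 2) + (t - t')/δ) / 2 := by
    rw [intervalIntegral.integral_div, intervalIntegral.integral_add (hIIsq.const_mul _)
      intervalIntegrable_const, intervalIntegral.integral_const_mul,
      intervalIntegral.integral_const, smul_eq_mul]
    ring
  have hsub2 : uIcc t 0 ⊆ uIcc t' 0 := by
    rw [uIcc_of_le ht, uIcc_of_le (le_trans ht' ht)]
    exact Icc_subset_Icc ht' le_rfl
  have h5 : ∫ u in t'..t, ‖σ' u‖ ^ 2 ≤ ∫ u in t'..0, ‖σ' u‖ ^ 2 := by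
    have hadd : (∫ u in t'..t, ‖σ' u‖ ^ 2) + ∫ u in t..0, ‖σ' u‖ ^ 2
        = ∫ u in t'..0, ‖σ' u‖ ^ 2 :=
      intervalIntegral.integral_add_adjacent_intervals hIIsq (h.2.1.mono_set hsub2)
    have hpos : 0 ≤ ∫ u in t..0, ‖σ' u‖ ^ 2 :=
      intervalIntegral.integral_nonneg ht fun u _ => by positivity
    linarith
  calc ‖σ t - σ t'‖ ≤ ∫ u in t'..t, (δ * ‖σ' u‖ ^ 2 + 1/δ) / 2 := by
        rw [h1]; exact le_trans h2 h3
    _ = (δ * (∫ u in t'..t, ‖σ' u‖ ^ 2) + (t - t')/δ) / 2 := h4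
    _ ≤ (δ * (∫ s in t'..0, ‖σ' s‖ ^ 2) + (t - t') / δ) / 2 := by
        have := mul_le_mul_of_nonneg_left h5 hδ.le
        linarith

-- ### End auxiliary ###


-- ## Section 6: comparison lemmas

lemma J_shift (τ e : Mspace d) : J (τ + e) τ = J e 0 := by
  rw [J, J]
  refine integral_congr_ae ?_
  filter_upwards [Lp.coeFn_add τ e, Lp.coeFn_zero (E := Rd d) (p := 2) (μ := cubeMeasure d)]
    with x h1 h2
  rw [h1, h2]
  simp

lemma J_zero_le_norm (e : Mspace d) : J e 0 ≤ Real.sqrt (mass d) * ‖e‖ := by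
  have := J_le_norm e 0
  rwa [sub_zero] at this

/-- Lemma A : Lipschitz-type estimate in `ψ`. -/
lemma Uhat_shift (c : Bounds d D) {t : ℝ} (ht : t ≤ 0) (ψ ψ' : Mspace d) :
    Uhat D t ψ ≤ Uhat D t ψ' +
      ((-t) * c.KF + c.KU) * (Real.sqrt (mass d) * ‖ψ - ψ'‖) := by
  refine le_of_forall_pos_le_add fun ε hε => ?_
  obtain ⟨σ, σ', hAC, hψ', hact⟩ := exists_near_minimizer c ht ψ' hε
  set e := ψ - ψ' with he
  have hJe : J e 0 ≤ Real.sqrt (mass d) * ‖e‖ := J_zero_le_norm e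
  have hJe0 : 0 ≤ J e 0 := J_nonneg e 0
  set σ2 : ℝ → Mspace d := fun s => σ s + e with hσ2
  have hAC2 : IsACOn t 0 σ2 σ' := by
    refine ⟨hAC.1, hAC.2.1, fun s hs => ?_⟩
    show σ s + e = (σ t + e) + _
    rw [hAC.2.2 s hs]
    abel
  have hstart : σ2 t = ψ := by
    show σ t + e = ψ
    rw [hψ', he]
    abel
  have hFs : ∀ s, Fcal D (σ s) - Fcal D (σ2 s) ≤ c.KF * (Real.sqrt (mass d) * ‖e‖) := by
    intro s
    have h1 : |Fcal D (σ s + e) - Fcal D (σ s)| ≤ c.KF * J (σ s + e) (σ s) :=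
      Fcal_diff c _ _
    rw [J_shift] at h1
    rw [abs_le] at h1
    have h2 : c.KF * J e 0 ≤ c.KF * (Real.sqrt (mass d) * ‖e‖) :=
      mul_le_mul_of_nonneg_left hJe c.KF_nonneg
    have h3 : Fcal D (σ s) - Fcal D (σ2 s) = -(Fcal D (σ s + e) - Fcal D (σ s)) := by
      show Fcal D (σ s) - Fcal D (σ s + e) = _
      ring
    rw [h3]
    linarith [h1.1]
  have hU : U0cal D (σ2 0) - U0cal D (σ 0) ≤ c.KU * (Real.sqrt (mass d) * ‖e‖) := by
    have h1 : |U0cal D (σ 0 + e) - U0cal D (σ 0)| ≤ c.KU * J (σ 0 + e) (σ 0) :=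
      U0cal_diff c _ _
    rw [J_shift] at h1
    rw [abs_le] at h1
    have h2 : c.KU * J e 0 ≤ c.KU * (Real.sqrt (mass d) * ‖e‖) :=
      mul_le_mul_of_nonneg_left hJe c.KU_nonneg
    have : U0cal D (σ2 0) - U0cal D (σ 0) = U0cal D (σ 0 + e) - U0cal D (σ 0) := rfl
    rw [this]
    linarith [h1.2]
  have hI1 := integrand_intervalIntegrable c ht hAC
  have hI2 := integrand_intervalIntegrable c ht hAC2
  have hdiff : (∫ s in t..0, ((1:ℝ)/2 * ‖σ' s‖ ^ 2 - Fcal D (σ2 s))) -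
      (∫ s in t..0, ((1:ℝ)/2 * ‖σ' s‖ ^ 2 - Fcal D (σ s)))
      ≤ (0 - t) * (c.KF * (Real.sqrt (mass d) * ‖e‖)) := by
    rw [← intervalIntegral.integral_sub hI2 hI1]
    have hmono := intervalIntegral.integral_mono_on ht (hI2.sub hI1)
      (intervalIntegrable_const (c := c.KF * (Real.sqrt (mass d) * ‖e‖)))
      (fun s _ => by
        have := hFs s
        show ((1:ℝ)/2 * ‖σ' s‖ ^ 2 - Fcal D (σ2 s)) -
          ((1:ℝ)/2 * ‖σ' s‖ ^ 2 - Fcal D (σ s)) ≤ _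
        linarith)
    rwa [intervalIntegral.integral_const, smul_eq_mul] at hmono
  have haction : action D t σ2 σ' ≤ action D t σ σ' +
      ((-t) * c.KF + c.KU) * (Real.sqrt (mass d) * ‖e‖) := by
    rw [action, action]
    have expand : ((-t) * c.KF + c.KU) * (Real.sqrt (mass d) * ‖e‖) =
        (0 - t) * (c.KF * (Real.sqrt (mass d) * ‖e‖)) +
        c.KU * (Real.sqrt (mass d) * ‖e‖) := by ring
    rw [expand]
    have : U0cal D (σ2 0) ≤ U0cal D (σ 0) + c.KU * (Real.sqrt (mass d) * ‖e‖) := by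
      linarith [hU]
    linarith [hdiff]
  have h1 := Uhat_le_action c ht hAC2 hstart
  calc Uhat D t ψ ≤ action D t σ2 σ' := h1
    _ ≤ action D t σ σ' + ((-t) * c.KF + c.KU) * (Real.sqrt (mass d) * ‖e‖) := haction
    _ ≤ Uhat D t ψ' + ((-t) * c.KF + c.KU) * (Real.sqrt (mass d) * ‖ψ - ψ'‖) + ε := by
      rw [← he]
      linarith [hact]

/-- Lemma B : time extension. -/
lemma Uhat_extend (c : Bounds d D) {t' t : ℝ} (h1 : t' ≤ t) (h2 : t ≤ 0) (ψ : Mspace d) :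
    Uhat D t' ψ ≤ Uhat D t ψ + (t - t') * c.BF := by
  have h12 : t' ≤ 0 := le_trans h1 h2
  refine le_of_forall_pos_le_add fun ε hε => ?_
  obtain ⟨σ, σ', hAC, hψ, hact⟩ := exists_near_minimizer c h2 ψ hε
  set σ2 : ℝ → Mspace d := fun s => if s ≤ t then ψ else σ s with hσ2
  set τ' : ℝ → Mspace d := fun u => if u ≤ t then 0 else σ' u with hτ'
  -- interval integrability of τ'
  have hτII1 : IntervalIntegrable τ' volume t' t := by
    rw [intervalIntegrable_iff, uIoc_of_le h1]
    refine (integrableOn_zero (ε' := Mspace d) (α := ℝ)).congr_fun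
      (fun u hu => ?_) measurableSet_Ioc
    simp only [hτ', if_pos hu.2]
  have hτII2 : IntervalIntegrable τ' volume t 0 := by
    rw [intervalIntegrable_iff, uIoc_of_le h2]
    have := hAC.1
    rw [intervalIntegrable_iff, uIoc_of_le h2] at this
    refine this.congr_fun (fun u hu => ?_) measurableSet_Ioc
    simp only [hτ', if_neg (not_le.mpr hu.1)]
  have hsqII1 : IntervalIntegrable (fun u => ‖τ' u‖ ^ 2) volume t' t := by
    rw [intervalIntegrable_iff, uIoc_of_le h1]
    refine (integrableOn_zero (ε' := ℝ) (α := ℝ)).congr_fun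
      (fun u hu => ?_) measurableSet_Ioc
    simp only [hτ', if_pos hu.2]
    simp
  have hsqII2 : IntervalIntegrable (fun u => ‖τ' u‖ ^ 2) volume t 0 := by
    rw [intervalIntegrable_iff, uIoc_of_le h2]
    have := hAC.2.1
    rw [intervalIntegrable_iff, uIoc_of_le h2] at this
    refine this.congr_fun (fun u hu => ?_) measurableSet_Ioc
    simp only [hτ', if_neg (not_le.mpr hu.1)]
  have hzero : ∀ a b : ℝ, a ≤ b → b ≤ t → (∫ u in a..b, τ' u) = 0 := by
    intro a b hab hbt
    have : EqOn τ' (fun _ => (0 : Mspace d)) (uIcc a b) := by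
      intro u hu
      rw [uIcc_of_le hab] at hu
      simp only [hτ', if_pos (le_trans hu.2 hbt)]
    rw [intervalIntegral.integral_congr this, intervalIntegral.integral_zero]
  have hcurve : ∀ s ∈ Icc t' (0:ℝ), σ2 s = σ2 t' + ∫ u in t'..s, τ' u := by
    intro s hs
    have hstart : σ2 t' = ψ := by simp only [hσ2, if_pos h1]
    rw [hstart]
    by_cases hst : s ≤ t
    · simp only [hσ2, if_pos hst]
      rw [hzero t' s hs.1 hst]
      abel
    · push_neg at hst
      simp only [hσ2, if_neg (not_le.mpr hst)]
      have hmem : s ∈ Icc t (0:ℝ) := ⟨hst.le, hs.2⟩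
      have hIs : IntervalIntegrable τ' volume t s := hτII2.mono_set
        (by rw [uIcc_of_le hst.le, uIcc_of_le h2]; exact Icc_subset_Icc le_rfl hs.2)
      have hadd : (∫ u in t'..t, τ' u) + (∫ u in t..s, τ' u) = ∫ u in t'..s, τ' u :=
        intervalIntegral.integral_add_adjacent_intervals hτII1 hIs
      have hts : (∫ u in t..s, τ' u) = ∫ u in t..s, σ' u := by
        refine intervalIntegral.integral_congr_ae ?_
        refine ae_of_all _ fun u hu => ?_
        rw [uIoc_of_le hst.le] at hu
        simp only [hτ', if_neg (not_le.mpr hu.1)]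
      rw [hAC.2.2 s hmem, hψ, ← hadd, hzero t' t h1 le_rfl, hts]
      abel
  have hAC2 : IsACOn t' 0 σ2 τ' := ⟨hτII1.trans hτII2, hsqII1.trans hsqII2, hcurve⟩
  have hstart2 : σ2 t' = ψ := by simp only [hσ2, if_pos h1]
  -- σ2 0 = σ 0
  have hend : σ2 0 = σ 0 := by
    by_cases h0 : (0:ℝ) ≤ t
    · have ht0 : t = 0 := le_antisymm h2 h0
      simp only [hσ2, if_pos h0]
      rw [← hψ, ht0]
    · simp only [hσ2, if_neg h0]
  -- split the action integral
  have hg1 : IntervalIntegrable (fun s => (1:ℝ)/2 * ‖τ' s‖ ^ 2 - Fcal D (σ2 s)) volume t' t := by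
    rw [intervalIntegrable_iff, uIoc_of_le h1]
    refine (integrableOn_const (C := -Fcal D ψ) measure_Ioc_lt_top.ne).congr_fun (fun u hu => ?_) measurableSet_Ioc
    simp only [hσ2, hτ', if_pos hu.2]
    simp
  have hg2 : IntervalIntegrable (fun s => (1:ℝ)/2 * ‖τ' s‖ ^ 2 - Fcal D (σ2 s)) volume t 0 := by
    rw [intervalIntegrable_iff, uIoc_of_le h2]
    have := integrand_intervalIntegrable c h2 hAC
    rw [intervalIntegrable_iff, uIoc_of_le h2] at this
    refine this.congr_fun (fun u hu => ?_) measurableSet_Ioc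
    simp only [hσ2, hτ', if_neg (not_le.mpr hu.1)]
  have hsplit : (∫ s in t'..0, ((1:ℝ)/2 * ‖τ' s‖ ^ 2 - Fcal D (σ2 s))) =
      (∫ s in t'..t, ((1:ℝ)/2 * ‖τ' s‖ ^ 2 - Fcal D (σ2 s))) +
      (∫ s in t..0, ((1:ℝ)/2 * ‖τ' s‖ ^ 2 - Fcal D (σ2 s))) :=
    (intervalIntegral.integral_add_adjacent_intervals hg1 hg2).symm
  have hpart1 : (∫ s in t'..t, ((1:ℝ)/2 * ‖τ' s‖ ^ 2 - Fcal D (σ2 s))) =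
      (t - t') * (-Fcal D ψ) := by
    have heq : EqOn (fun s => (1:ℝ)/2 * ‖τ' s‖ ^ 2 - Fcal D (σ2 s))
        (fun _ => -Fcal D ψ) (uIcc t' t) := by
      intro u hu
      rw [uIcc_of_le h1] at hu
      simp only [hσ2, hτ', if_pos hu.2]
      simp
    rw [intervalIntegral.integral_congr heq, intervalIntegral.integral_const, smul_eq_mul]
  have hpart2 : (∫ s in t..0, ((1:ℝ)/2 * ‖τ' s‖ ^ 2 - Fcal D (σ2 s))) =
      ∫ s in t..0, ((1:ℝ)/2 * ‖σ' s‖ ^ 2 - Fcal D (σ s)) := by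
    refine intervalIntegral.integral_congr_ae (ae_of_all _ fun u hu => ?_)
    rw [uIoc_of_le h2] at hu
    simp only [hσ2, hτ', if_neg (not_le.mpr hu.1)]
  have haction : action D t' σ2 τ' = (t - t') * (-Fcal D ψ) + action D t σ σ' := by
    rw [action, action, hsplit, hpart1, hpart2, hend]
    ring
  have hF := abs_Fcal_le c ψ
  rw [abs_le] at hF
  have hbound : action D t' σ2 τ' ≤ action D t σ σ' + (t - t') * c.BF := by
    rw [haction]
    nlinarith [hF.1, sub_nonneg.mpr h1]
  calc Uhat D t' ψ ≤ action D t' σ2 τ' := Uhat_le_action c h12 hAC2 hstart2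
    _ ≤ action D t σ σ' + (t - t') * c.BF := hbound
    _ ≤ Uhat D t ψ + (t - t') * c.BF + ε := by linarith [hact]

/-- Lemma C : time restriction. -/
lemma Uhat_restrict (c : Bounds d D) {t' t : ℝ} (h1 : t' ≤ t) (h2 : t ≤ 0) (ψ : Mspace d)
    {E δ : ℝ} (hδ : 0 < δ) (hE : 2 * (2 * (-t') * c.BF + 2 * c.BU + 1) ≤ E) :
    Uhat D t ψ ≤ Uhat D t' ψ + (t - t') * c.BF +
      ((-t) * c.KF + c.KU) * (Real.sqrt (mass d) * ((δ * E + (t - t') / δ) / 2)) := by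
  have h12 : t' ≤ 0 := le_trans h1 h2
  refine le_of_forall_pos_le_add fun ε hε => ?_
  have hε' : 0 < min ε 1 := lt_min hε one_pos
  obtain ⟨σ, σ', hAC, hψ, hact⟩ := exists_near_minimizer c h12 ψ hε'
  have hsub2 : uIcc t 0 ⊆ uIcc t' 0 := by
    rw [uIcc_of_le h2, uIcc_of_le h12]
    exact Icc_subset_Icc h1 le_rfl
  have hsub1 : uIcc t' t ⊆ uIcc t' 0 := by
    rw [uIcc_of_le h1, uIcc_of_le h12]
    exact Icc_subset_Icc le_rfl h2
  -- restriction is admissible on [t,0]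
  have hrestr : IsACOn t 0 σ σ' := by
    refine ⟨hAC.1.mono_set hsub2, hAC.2.1.mono_set hsub2, fun s hs => ?_⟩
    have ha := hAC.2.2 s ⟨le_trans h1 hs.1, hs.2⟩
    have hb := hAC.2.2 t ⟨h1, h2⟩
    have hIts : IntervalIntegrable σ' volume t s := hAC.1.mono_set
      (by rw [uIcc_of_le hs.1, uIcc_of_le h12]; exact Icc_subset_Icc h1 hs.2)
    have hadd : (∫ u in t'..t, σ' u) + (∫ u in t..s, σ' u) = ∫ u in t'..s, σ' u :=
      intervalIntegral.integral_add_adjacent_intervals (hAC.1.mono_set hsub1) hIts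
    rw [ha, hb, ← hadd]
    abel
  -- action splitting
  have hint := integrand_intervalIntegrable c h12 hAC
  have hi1 : IntervalIntegrable (fun s => (1:ℝ)/2 * ‖σ' s‖ ^ 2 - Fcal D (σ s)) volume t' t :=
    hint.mono_set hsub1
  have hi2 : IntervalIntegrable (fun s => (1:ℝ)/2 * ‖σ' s‖ ^ 2 - Fcal D (σ s)) volume t 0 :=
    hint.mono_set hsub2
  have hsplit : action D t' σ σ' =
      (∫ s in t'..t, ((1:ℝ)/2 * ‖σ' s‖ ^ 2 - Fcal D (σ s))) + action D t σ σ' := by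
    rw [action, action, ← intervalIntegral.integral_add_adjacent_intervals hi1 hi2]
    ring
  have hlow : (t - t') * (-c.BF) ≤
      ∫ s in t'..t, ((1:ℝ)/2 * ‖σ' s‖ ^ 2 - Fcal D (σ s)) := by
    have := intervalIntegral.integral_mono_on h1 (intervalIntegrable_const (c := -c.BF))
      hi1 (fun s _ => by
        have hf := abs_Fcal_le c (σ s)
        rw [abs_le] at hf
        nlinarith [sq_nonneg ‖σ' s‖])
    rwa [intervalIntegral.integral_const, smul_eq_mul] at this
  have hactres : action D t σ σ' ≤ action D t' σ σ' + (t - t') * c.BF := by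
    rw [hsplit]
    nlinarith [hlow]
  -- energy bound
  have hUb := Uhat_le c h12 ψ
  have hener := energy_bound c h12 hAC
  have hene2 : ∫ s in t'..0, ‖σ' s‖ ^ 2 ≤ E := by
    have hstep : action D t' σ σ' ≤ (-t') * c.BF + c.BU + 1 := by
      have := min_le_right ε 1
      linarith [hact, hUb]
    calc ∫ s in t'..0, ‖σ' s‖ ^ 2 ≤ 2 * (action D t' σ σ' + (-t') * c.BF + c.BU) := hener
      _ ≤ 2 * (2 * (-t') * c.BF + 2 * c.BU + 1) := by nlinarith [hstep]
      _ ≤ E := hE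
  -- distance bound
  have hdist : ‖σ t - ψ‖ ≤ (δ * E + (t - t') / δ) / 2 := by
    rw [← hψ]
    calc ‖σ t - σ t'‖ ≤ (δ * (∫ s in t'..0, ‖σ' s‖ ^ 2) + (t - t') / δ) / 2 :=
          norm_sub_le_energy c h1 h2 hAC hδ
      _ ≤ (δ * E + (t - t') / δ) / 2 := by
          have := mul_le_mul_of_nonneg_left hene2 hδ.le
          linarith
  -- combine
  have hshift := Uhat_shift c h2 ψ (σ t)
  have hKnn : 0 ≤ (-t) * c.KF + c.KU :=
    add_nonneg (mul_nonneg (neg_nonneg.mpr h2) c.KF_nonneg) c.KU_nonneg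
  have hnorm : ‖ψ - σ t‖ ≤ (δ * E + (t - t') / δ) / 2 := by
    rw [norm_sub_rev]; exact hdist
  have hfinal : ((-t) * c.KF + c.KU) * (Real.sqrt (mass d) * ‖ψ - σ t‖) ≤
      ((-t) * c.KF + c.KU) * (Real.sqrt (mass d) * ((δ * E + (t - t') / δ) / 2)) := by
    refine mul_le_mul_of_nonneg_left ?_ hKnn
    exact mul_le_mul_of_nonneg_left hnorm (Real.sqrt_nonneg _)
  have hUt := Uhat_le_action c h2 hrestr rfl
  have : Uhat D t (σ t) ≤ Uhat D t' ψ + (t - t') * c.BF + min ε 1 := by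
    calc Uhat D t (σ t) ≤ action D t σ σ' := hUt
      _ ≤ action D t' σ σ' + (t - t') * c.BF := hactres
      _ ≤ Uhat D t' ψ + (t - t') * c.BF + min ε 1 := by linarith [hact]
  have hmin : min ε 1 ≤ ε := min_le_left _ _
  linarith [hshift, hfinal, this]


-- ## Section 7: continuity

lemma Uhat_time_diff (c : Bounds d D) {a b : ℝ} (hab : a ≤ b) (hb : b ≤ 0) (ψ₀ : Mspace d)
    {E δ : ℝ} (hδ : 0 < δ) (hE : 2 * (2 * (-a) * c.BF + 2 * c.BU + 1) ≤ E) :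
    |Uhat D b ψ₀ - Uhat D a ψ₀| ≤ (b - a) * c.BF +
      ((-b) * c.KF + c.KU) * (Real.sqrt (mass d) * ((δ * E + (b - a) / δ) / 2)) := by
  have hB := Uhat_extend c hab hb ψ₀
  have hC := Uhat_restrict c hab hb ψ₀ hδ hE
  have hKnn : 0 ≤ ((-b) * c.KF + c.KU) *
      (Real.sqrt (mass d) * ((δ * E + (b - a) / δ) / 2)) := by
    have h1 : 0 ≤ (-b) * c.KF + c.KU :=
      add_nonneg (mul_nonneg (neg_nonneg.mpr hb) c.KF_nonneg) c.KU_nonneg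
    have h2 : 0 ≤ E := by nlinarith [mul_nonneg (mul_nonneg (by norm_num : (0:ℝ) ≤ 2)
      (neg_nonneg.mpr (le_trans hab hb))) c.BF_nonneg, c.BU_nonneg]
    have h3 : 0 ≤ (b - a) / δ := div_nonneg (by linarith) hδ.le
    have h4 : 0 ≤ (δ * E + (b - a) / δ) / 2 := by positivity
    positivity
  have hBFnn : 0 ≤ (b - a) * c.BF := mul_nonneg (by linarith) c.BF_nonneg
  rw [abs_le]
  constructor
  · linarith
  · linarith

set_option maxHeartbeats 2000000 in
lemma Uhat_continuousOn (c : Bounds d D) :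
    ContinuousOn (fun p : ℝ × Mspace d => Uhat D p.1 p.2) (Iic (0:ℝ) ×ˢ univ) := by
  rintro ⟨t₀, ψ₀⟩ hp
  have ht₀ : t₀ ≤ 0 := hp.1
  rw [Metric.continuousWithinAt_iff]
  intro ε hε
  obtain ⟨sm, hsm⟩ : ∃ x : ℝ, x = Real.sqrt (mass d) := ⟨_, rfl⟩
  have hsm0 : 0 ≤ sm := hsm ▸ Real.sqrt_nonneg _
  obtain ⟨KA, hKA⟩ : ∃ x : ℝ, x = ((1 - t₀) * c.KF + c.KU) * sm := ⟨_, rfl⟩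
  have hKA0 : 0 ≤ KA := by
    rw [hKA]
    have h1 : 0 ≤ (1 - t₀) * c.KF := mul_nonneg (by linarith) c.KF_nonneg
    have h2 := c.KU_nonneg
    nlinarith
  obtain ⟨E, hE⟩ : ∃ x : ℝ, x = 2 * (2 * (1 - t₀) * c.BF + 2 * c.BU + 1) := ⟨_, rfl⟩
  have hE0 : 0 < E := by
    rw [hE]
    have h1 : 0 ≤ 2 * (1 - t₀) * c.BF := by nlinarith [c.BF_nonneg]
    have h2 := c.BU_nonneg
    nlinarith
  have h2' : (0:ℝ) < 2 * KA * E + 2 := by nlinarith [mul_nonneg hKA0 hE0.le]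
  obtain ⟨δ, hδdef⟩ : ∃ x : ℝ, x = ε / (2 * KA * E + 2) := ⟨_, rfl⟩
  have hδ : 0 < δ := hδdef ▸ div_pos hε h2'
  obtain ⟨Q, hQ⟩ : ∃ x : ℝ, x = c.BF + KA * (1/δ) / 2 + 1 := ⟨_, rfl⟩
  have hQ0 : 0 < Q := by
    rw [hQ]
    have h1 : 0 ≤ KA * (1/δ) / 2 := by positivity
    have h2 := c.BF_nonneg
    linarith
  obtain ⟨η, hη⟩ : ∃ x : ℝ, x = min 1 (min (ε/(4*Q)) (ε/(4*(KA+1)))) := ⟨_, rfl⟩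
  have hη0 : 0 < η := by
    rw [hη]
    refine lt_min one_pos (lt_min (by positivity) (by positivity))
  refine ⟨η, hη0, ?_⟩
  rintro ⟨t, ψ⟩ hq hdist
  have ht : t ≤ 0 := hq.1
  have hdt : |t - t₀| < η := by
    have h1 : dist t t₀ ≤ dist ((t:ℝ), ψ) (t₀, ψ₀) := by
      rw [Prod.dist_eq]; exact le_max_left _ _
    rw [Real.dist_eq] at h1
    linarith [hdist]
  have hdψ : ‖ψ - ψ₀‖ < η := by
    have h1 : dist ψ ψ₀ ≤ dist ((t:ℝ), ψ) (t₀, ψ₀) := by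
      rw [Prod.dist_eq]; exact le_max_right _ _
    rw [dist_eq_norm] at h1
    linarith [hdist]
  have hη1 : η ≤ 1 := by rw [hη]; exact min_le_left _ _
  have htlow : t₀ - 1 ≤ t := by
    rw [abs_lt] at hdt
    linarith
  have hKt : ((-t) * c.KF + c.KU) * sm ≤ KA := by
    rw [hKA]
    have h1 : (-t) * c.KF ≤ (1 - t₀) * c.KF :=
      mul_le_mul_of_nonneg_right (by linarith) c.KF_nonneg
    nlinarith [c.KU_nonneg]
  -- step 1: vary ψ at fixed t
  have step1 : |Uhat D t ψ - Uhat D t ψ₀| ≤ KA * ‖ψ - ψ₀‖ := by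
    have hA1 := Uhat_shift c ht ψ ψ₀
    have hA2 := Uhat_shift c ht ψ₀ ψ
    rw [norm_sub_rev ψ₀ ψ] at hA2
    rw [← hsm] at hA1 hA2
    have hb1 : ((-t) * c.KF + c.KU) * (sm * ‖ψ - ψ₀‖) ≤ KA * ‖ψ - ψ₀‖ := by
      rw [← mul_assoc]
      exact mul_le_mul_of_nonneg_right hKt (norm_nonneg _)
    rw [abs_le]
    constructor <;> [linarith [hA2]; linarith [hA1]]
  -- step 2: vary t at fixed ψ₀
  obtain ⟨a, ha⟩ : ∃ x : ℝ, x = min t t₀ := ⟨_, rfl⟩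
  obtain ⟨b, hb⟩ : ∃ x : ℝ, x = max t t₀ := ⟨_, rfl⟩
  have hab : a ≤ b := by rw [ha, hb]; exact min_le_max
  have hb0 : b ≤ 0 := by rw [hb]; exact max_le ht ht₀
  have halow : t₀ - 1 ≤ a := by rw [ha]; exact le_min htlow (by linarith)
  have hEa : 2 * (2 * (-a) * c.BF + 2 * c.BU + 1) ≤ E := by
    rw [hE]
    have : (-a) * c.BF ≤ (1 - t₀) * c.BF :=
      mul_le_mul_of_nonneg_right (by linarith) c.BF_nonneg
    nlinarith
  have hba : b - a = |t - t₀| := by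
    rcases le_total t t₀ with h | h
    · rw [ha, hb, min_eq_left h, max_eq_right h, abs_of_nonpos (by linarith : t - t₀ ≤ 0)]
      ring
    · rw [ha, hb, min_eq_right h, max_eq_left h, abs_of_nonneg (by linarith : 0 ≤ t - t₀)]
  have step2' := Uhat_time_diff c hab hb0 ψ₀ hδ hEa
  rw [← hsm] at step2'
  have hKb : ((-b) * c.KF + c.KU) * sm ≤ KA := by
    rw [hKA]
    have h1 : (-b) * c.KF ≤ (1 - t₀) * c.KF := by
      refine mul_le_mul_of_nonneg_right ?_ c.KF_nonneg
      have : t₀ ≤ b := by rw [hb]; exact le_max_right _ _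
      linarith
    nlinarith [c.KU_nonneg]
  have hterm : ((-b) * c.KF + c.KU) * (sm * ((δ * E + (b - a) / δ) / 2)) ≤
      KA * ((δ * E + (b - a) / δ) / 2) := by
    have hpos : 0 ≤ (δ * E + (b - a) / δ) / 2 := by
      have h1 : 0 ≤ (b - a) / δ := div_nonneg (by linarith) hδ.le
      have h2 : 0 ≤ δ * E := mul_nonneg hδ.le hE0.le
      linarith
    calc ((-b) * c.KF + c.KU) * (sm * ((δ * E + (b - a) / δ) / 2))
        = (((-b) * c.KF + c.KU) * sm) * ((δ * E + (b - a) / δ) / 2) := by ring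
      _ ≤ KA * ((δ * E + (b - a) / δ) / 2) := mul_le_mul_of_nonneg_right hKb hpos
  have step2 : |Uhat D t ψ₀ - Uhat D t₀ ψ₀| ≤ (b - a) * c.BF +
      KA * ((δ * E + (b - a) / δ) / 2) := by
    have habs : |Uhat D t ψ₀ - Uhat D t₀ ψ₀| = |Uhat D b ψ₀ - Uhat D a ψ₀| := by
      rcases le_total t t₀ with h | h
      · rw [ha, hb, min_eq_left h, max_eq_right h, abs_sub_comm]
      · rw [ha, hb, min_eq_right h, max_eq_left h]
    rw [habs]
    linarith [step2', hterm]
  -- assemble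
  have hRfin : KA * (δ * E / 2) ≤ ε / 4 := by
    have hle : (2 * KA * E) / (2 * KA * E + 2) ≤ 1 := (div_le_one h2').mpr (by linarith)
    have heq : KA * (δ * E / 2) = (ε / 4) * ((2 * KA * E) / (2 * KA * E + 2)) := by
      rw [hδdef]
      ring
    rw [heq]
    have h4 : 0 ≤ ε / 4 := by linarith
    nlinarith [mul_le_mul_of_nonneg_left hle h4]
  have hba0 : 0 ≤ b - a := by linarith [hab]
  have hdψ2 : ‖ψ - ψ₀‖ < ε / (4 * (KA + 1)) := by
    rw [hη] at hdψ
    exact lt_of_lt_of_le hdψ (le_trans (min_le_right _ _) (min_le_right _ _))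
  have hdt2 : b - a < ε / (4 * Q) := by
    rw [hba, hη] at *
    exact lt_of_lt_of_le hdt (le_trans (min_le_right _ _) (min_le_left _ _))
  have hq1 : KA * ‖ψ - ψ₀‖ < ε / 4 := by
    have hKA1 : (0:ℝ) < KA + 1 := by linarith
    have hmul := mul_lt_mul_of_pos_left hdψ2 hKA1
    have heq : (KA + 1) * (ε / (4 * (KA + 1))) = ε / 4 := by
      rw [← div_div, mul_comm, div_mul_cancel₀ _ (by linarith : KA + 1 ≠ 0)]
    nlinarith [norm_nonneg (ψ - ψ₀)]
  have hq2 : Q * (b - a) < ε / 4 := by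
    have hmul := mul_lt_mul_of_pos_left hdt2 hQ0
    have heq : Q * (ε / (4 * Q)) = ε / 4 := by
      rw [← div_div, mul_comm, div_mul_cancel₀ _ hQ0.ne']
    linarith
  have hsplitK : KA * ((δ * E + (b - a) / δ) / 2) =
      KA * (δ * E / 2) + KA * (1/δ) / 2 * (b - a) := by
    rw [div_eq_mul_inv (b-a) δ, one_div]
    ring
  have hmid : (b - a) * c.BF + KA * (1/δ) / 2 * (b - a) ≤ Q * (b - a) := by
    have hQe : Q * (b - a) = (c.BF + KA * (1/δ) / 2 + 1) * (b - a) := by rw [hQ]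
    nlinarith [hba0]
  have htotal : |Uhat D t ψ - Uhat D t₀ ψ₀| < ε := by
    have htri : |Uhat D t ψ - Uhat D t₀ ψ₀| ≤
        |Uhat D t ψ - Uhat D t ψ₀| + |Uhat D t ψ₀ - Uhat D t₀ ψ₀| := abs_sub_le _ _ _
    have hstep2b : |Uhat D t ψ₀ - Uhat D t₀ ψ₀| ≤
        (b - a) * c.BF + KA * (δ * E / 2) + KA * (1/δ) / 2 * (b - a) := by
      rw [hsplitK] at step2
      linarith
    linarith [step1, hq1, hq2, hRfin, hmid, htri, hstep2b]
  show dist (Uhat D t ψ) (Uhat D t₀ ψ₀) < ε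
  rw [Real.dist_eq]
  exact htotal



-- ## Section 8: equivariance

lemma measurableSet_cube (d : ℕ) : MeasurableSet (cube d) := by
  have : cube d = ⋂ i : Fin d, {x : Rd d | 0 ≤ x i ∧ x i < 1} := by
    ext x; simp [cube, Set.mem_iInter]
  rw [this]
  refine MeasurableSet.iInter fun i => ?_
  have hm : Measurable (fun x : Rd d => x i) :=
    (continuous_apply i).measurable.comp (EuclideanSpace.equiv (Fin d) ℝ).continuous.measurable
  exact (hm measurableSet_Ico : MeasurableSet {x : Rd d | x i ∈ Ico (0:ℝ) 1})

lemma ae_mem_cube (d : ℕ) : ∀ᵐ x ∂(cubeMeasure d), x ∈ cube d :=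
  ae_restrict_mem (measurableSet_cube d)

/-- The inverse of a cube automorphism. -/
def CubeAuto.invAuto {d : ℕ} (h : CubeAuto d) : CubeAuto d where
  toFun := h.invFun
  invFun := h.toFun
  measurable_toFun := h.measurable_invFun
  measurable_invFun := h.measurable_toFun
  mapsTo := h.mapsTo_inv
  mapsTo_inv := h.mapsTo
  leftInv := h.rightInv
  rightInv := h.leftInv
  measurePreserving := by
    refine ⟨h.measurable_invFun, ?_⟩
    conv_lhs => rw [← h.measurePreserving.map_eq]
    rw [Measure.map_map h.measurable_invFun h.measurable_toFun]
    have hae : h.invFun ∘ h.toFun =ᵐ[cubeMeasure d] id :=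
      (ae_mem_cube d).mono fun x hx => h.leftInv x hx
    rw [Measure.map_congr hae, Measure.map_id]

lemma ae_comp_auto {d : ℕ} (h : CubeAuto d) {p : Rd d → Prop}
    (hp : ∀ᵐ y ∂(cubeMeasure d), p y) : ∀ᵐ x ∂(cubeMeasure d), p (h.toFun x) :=
  h.measurePreserving.quasiMeasurePreserving.tendsto_ae.eventually hp

lemma coe_comp_ae {d : ℕ} (h : CubeAuto d) (η : Mspace d) :
    Mcomp η h =ᵐ[cubeMeasure d] fun x => η (h.toFun x) :=
  Lp.coeFn_compMeasurePreserving η h.measurePreserving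

lemma tau_ae {d : ℕ} (h : CubeAuto d) (z : Mspace d) (η : Mspace d) :
    ⇑(Mcomp η h + z) =ᵐ[cubeMeasure d] fun x => η (h.toFun x) + z x := by
  filter_upwards [Lp.coeFn_add (Mcomp η h) z, coe_comp_ae h η] with x h1 h2
  rw [h1]
  simp only [Pi.add_apply]
  rw [h2]

lemma integral_comp_auto {d : ℕ} (h : CubeAuto d) {g : Rd d → ℝ}
    (hg : AEStronglyMeasurable g (cubeMeasure d)) :
    ∫ x, g (h.toFun x) ∂(cubeMeasure d) = ∫ x, g x ∂(cubeMeasure d) := by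
  conv_rhs => rw [← h.measurePreserving.map_eq]
  exact (integral_map h.measurable_toFun.aemeasurable
    (by rwa [h.measurePreserving.map_eq])).symm

lemma intVec_sub {d : ℕ} (k1 k2 : Fin d → ℤ) :
    intVec k1 - intVec k2 = intVec (k1 - k2) := by
  ext i
  simp only [PiLp.sub_apply, intVec_apply, Pi.sub_apply]
  push_cast
  ring

lemma Gone_tau {d : ℕ} {g : Rd d → ℝ} (hgc : Continuous g) (hper : IsPeriodicRd g)
    (h : CubeAuto d) {z : Mspace d} (hz : IsIntegerValued z) (η : Mspace d) :
    ∀ᵐ x ∂(cubeMeasure d),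
      Gone g (Mcomp η h + z) ((Mcomp η h + z) x) = Gone g η (η (h.toFun x)) := by
  filter_upwards [tau_ae h z η, hz] with x hx hkx
  obtain ⟨kx, hkx⟩ := hkx
  have step1 : Gone g (Mcomp η h + z) ((Mcomp η h + z) x) =
      ∫ y, g (η (h.toFun x) - η (h.toFun y)) ∂(cubeMeasure d) := by
    rw [Gone]
    refine integral_congr_ae ?_
    filter_upwards [tau_ae h z η, hz] with y hy hky
    obtain ⟨ky, hky⟩ := hky
    rw [hy, hx, hkx, hky]
    rw [show (η (h.toFun x) + intVec kx) - (η (h.toFun y) + intVec ky) =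
      (η (h.toFun x) - η (h.toFun y)) + (intVec kx - intVec ky) from by abel,
      intVec_sub, hper]
  rw [step1, Gone]
  exact integral_comp_auto h
    ((hgc.comp_aestronglyMeasurable
      (aestronglyMeasurable_const.sub (Lp.aestronglyMeasurable η))))

lemma Wd_tau {d : ℕ} {g : Rd d → ℝ} {B L : ℝ} (hgc : Continuous g) (hB : ∀ v, |g v| ≤ B)
    (hL : ∀ a b, |g a - g b| ≤ L * ‖a - b‖) (hL0 : 0 ≤ L) (hper : IsPeriodicRd g)
    (h : CubeAuto d) {z : Mspace d} (hz : IsIntegerValued z) (η : Mspace d) :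
    Wd g (Mcomp η h + z) = Wd g η := by
  rw [Wd, Wd]
  have h1 : ∫ x, Gone g (Mcomp η h + z) ((Mcomp η h + z) x) ∂(cubeMeasure d) =
      ∫ x, Gone g η (η (h.toFun x)) ∂(cubeMeasure d) :=
    integral_congr_ae (Gone_tau hgc hper h hz η)
  have h2 : ∫ x, Gone g η (η (h.toFun x)) ∂(cubeMeasure d) =
      ∫ x, Gone g η (η x) ∂(cubeMeasure d) :=
    integral_comp_auto h ((Gone_continuous hgc hB hL hL0 η).comp_aestronglyMeasurable
      (Lp.aestronglyMeasurable η))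
  rw [h1, h2]

variable {d : ℕ} {D : GoodData d}

lemma Fcal_tau (c : Bounds d D) (h : CubeAuto d) {z : Mspace d} (hz : IsIntegerValued z)
    (η : Mspace d) : Fcal D (Mcomp η h + z) = Fcal D η := by
  rw [Fcal_eq, Fcal_eq,
    Wd_tau D.φ_smooth.continuous c.hBφ c.hLφ c.Lφ_nonneg D.φ_periodic h hz η]

lemma U0cal_tau (c : Bounds d D) (h : CubeAuto d) {z : Mspace d} (hz : IsIntegerValued z)
    (η : Mspace d) : U0cal D (Mcomp η h + z) = U0cal D η := by
  rw [U0cal_eq, U0cal_eq]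
  have h1 : ∫ x, (D.U0 ((Mcomp η h + z) x) +
        (1/2) * Gone D.U1 (Mcomp η h + z) ((Mcomp η h + z) x)) ∂(cubeMeasure d) =
      ∫ x, (D.U0 (η (h.toFun x)) + (1/2) * Gone D.U1 η (η (h.toFun x))) ∂(cubeMeasure d) := by
    refine integral_congr_ae ?_
    filter_upwards [Gone_tau D.U1_smooth.continuous D.U1_periodic h hz η,
      tau_ae h z η, hz] with x hG hx hkx
    obtain ⟨kx, hkx⟩ := hkx
    rw [hG, hx, hkx, D.U0_periodic]
  have h2 : ∫ x, (D.U0 (η (h.toFun x)) + (1/2) * Gone D.U1 η (η (h.toFun x))) ∂(cubeMeasure d)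
      = ∫ x, (D.U0 (η x) + (1/2) * Gone D.U1 η (η x)) ∂(cubeMeasure d) := by
    have hGc : Continuous (fun q => D.U0 q + (1/2) * Gone D.U1 η q) :=
      D.U0_smooth.continuous.add
        (continuous_const.mul (Gone_continuous D.U1_smooth.continuous c.hB1 c.hL1 c.L1_nonneg η))
    exact integral_comp_auto h
      (hGc.comp_aestronglyMeasurable (Lp.aestronglyMeasurable η))
  rw [h1, h2]

/-- `Mcomp` as a continuous linear map. -/
def Lmap (h : CubeAuto d) : Mspace d →L[ℝ] Mspace d :=
  (Lp.compMeasurePreservingₗᵢ ℝ h.toFun h.measurePreserving).toContinuousLinearMap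

lemma Lmap_apply (h : CubeAuto d) (η : Mspace d) : Lmap h η = Mcomp η h := rfl

lemma norm_Mcomp (h : CubeAuto d) (η : Mspace d) : ‖Mcomp η h‖ = ‖η‖ :=
  Lp.norm_compMeasurePreserving η h.measurePreserving

set_option maxHeartbeats 1000000 in
lemma ASet_subset_comp (c : Bounds d D) {t : ℝ} (ht : t ≤ 0) (h : CubeAuto d)
    {z : Mspace d} (hz : IsIntegerValued z) (ψ : Mspace d) :
    ASet D t ψ ⊆ ASet D t (Mcomp ψ h + z) := by
  rintro A ⟨σ, σ', hAC, hψ, rfl⟩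
  refine ⟨fun s => Mcomp (σ s) h + z, fun s => Mcomp (σ' s) h, ⟨?_, ?_, ?_⟩, ?_, ?_⟩
  · have h1 := hAC.1
    rw [intervalIntegrable_iff] at h1
    show IntervalIntegrable (fun s => Mcomp (σ' s) h) volume t 0
    rw [intervalIntegrable_iff]
    exact (Lmap h).integrable_comp h1
  · show IntervalIntegrable (fun s => ‖Mcomp (σ' s) h‖ ^ 2) volume t 0
    have heq : (fun s => ‖Mcomp (σ' s) h‖ ^ 2) = fun s => ‖σ' s‖ ^ 2 :=
      funext fun s => by rw [norm_Mcomp]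
    rw [heq]
    exact hAC.2.1
  · intro s hs
    show Mcomp (σ s) h + z = (Mcomp (σ t) h + z) + ∫ u in t..s, Mcomp (σ' u) h
    have hw := hAC.2.2 s hs
    have hcomm : (∫ u in t..s, Mcomp (σ' u) h) = Mcomp (∫ u in t..s, σ' u) h := by
      rw [← Lmap_apply]
      have := (Lmap h).intervalIntegral_comp_comm (hAC.1.mono_set
        (by rw [uIcc_of_le hs.1, uIcc_of_le ht]; exact Icc_subset_Icc le_rfl hs.2))
      rw [← this]
      rfl
    rw [hcomm, hw, ← Lmap_apply, ← Lmap_apply, ← Lmap_apply, map_add]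
    abel
  · show Mcomp (σ t) h + z = Mcomp ψ h + z
    rw [hψ]
  · have hmain : action D t (fun s => Mcomp (σ s) h + z) (fun s => Mcomp (σ' s) h)
        = action D t σ σ' := by
      rw [action, action]
      have hint : (∫ s in t..0, ((1:ℝ)/2 * ‖Mcomp (σ' s) h‖ ^ 2 -
          Fcal D (Mcomp (σ s) h + z))) = ∫ s in t..0, ((1:ℝ)/2 * ‖σ' s‖ ^ 2 - Fcal D (σ s)) := by
        refine intervalIntegral.integral_congr fun u _ => ?_
        rw [norm_Mcomp, Fcal_tau c h hz]
      have hU : U0cal D (Mcomp (σ 0) h + z) = U0cal D (σ 0) := U0cal_tau c h hz (σ 0)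
      show (∫ s in t..0, ((1:ℝ)/2 * ‖Mcomp (σ' s) h‖ ^ 2 - Fcal D (Mcomp (σ s) h + z))) +
          U0cal D (Mcomp (σ 0) h + z) = _
      rw [hint, hU]
    exact hmain.symm

lemma Mcomp_add (h : CubeAuto d) (a b : Mspace d) :
    Mcomp (a + b) h = Mcomp a h + Mcomp b h :=
  map_add (Lp.compMeasurePreserving h.toFun h.measurePreserving) a b

set_option maxHeartbeats 1000000 in
lemma Mcomp_inv_cancel (h : CubeAuto d) (ψ : Mspace d) :
    Mcomp (Mcomp ψ h) h.invAuto = ψ := by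
  refine Lp.ext ?_
  have h1 := coe_comp_ae h.invAuto (Mcomp ψ h)
  have h2 : ∀ᵐ x ∂(cubeMeasure d), (Mcomp ψ h) (h.invAuto.toFun x) = ψ (h.toFun (h.invFun x)) :=
    ae_comp_auto h.invAuto (coe_comp_ae h ψ)
  have h3 : ∀ᵐ x ∂(cubeMeasure d), h.toFun (h.invFun x) = x :=
    (ae_mem_cube d).mono fun x hx => h.rightInv x hx
  filter_upwards [h1, h2, h3] with x e1 e2 e3
  rw [e1]
  show (Mcomp ψ h) (h.invAuto.toFun x) = ψ x
  rw [e2, e3]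

set_option maxHeartbeats 1000000 in
lemma isIntegerValued_neg_comp (h : CubeAuto d) {z : Mspace d} (hz : IsIntegerValued z) :
    IsIntegerValued (-(Mcomp z h.invAuto)) := by
  have h1 : ∀ᵐ x ∂(cubeMeasure d), ∃ k : Fin d → ℤ, z (h.invAuto.toFun x) = intVec k :=
    ae_comp_auto h.invAuto hz
  filter_upwards [h1, coe_comp_ae h.invAuto z,
    Lp.coeFn_neg (Mcomp z h.invAuto)] with x e1 e2 e3
  obtain ⟨k, hk⟩ := e1
  refine ⟨-k, ?_⟩
  rw [e3]
  show -(Mcomp z h.invAuto) x = _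
  rw [e2, hk]
  ext i
  simp [intVec_apply]

lemma Uhat_comp_le (c : Bounds d D) {t : ℝ} (ht : t ≤ 0) (h : CubeAuto d)
    {z : Mspace d} (hz : IsIntegerValued z) (ψ : Mspace d) :
    Uhat D t (Mcomp ψ h + z) ≤ Uhat D t ψ := by
  rw [Uhat_eq_sInf, Uhat_eq_sInf]
  exact csInf_le_csInf (ASet_bddBelow c ht _) (ASet_nonempty t ψ)
    (ASet_subset_comp c ht h hz ψ)

lemma Uhat_equivariant (c : Bounds d D) {t : ℝ} (ht : t ≤ 0) (ψ : Mspace d)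
    (h : CubeAuto d) {z : Mspace d} (hz : IsIntegerValued z) :
    Uhat D t (Mcomp ψ h + z) = Uhat D t ψ := by
  refine le_antisymm (Uhat_comp_le c ht h hz ψ) ?_
  have key := Uhat_comp_le c ht h.invAuto (isIntegerValued_neg_comp h hz) (Mcomp ψ h + z)
  have harg : Mcomp (Mcomp ψ h + z) h.invAuto + -(Mcomp z h.invAuto) = ψ := by
    rw [Mcomp_add]
    rw [show Mcomp (Mcomp ψ h) h.invAuto + Mcomp z h.invAuto + -(Mcomp z h.invAuto) =
      Mcomp (Mcomp ψ h) h.invAuto from by abel]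
    exact Mcomp_inv_cancel h ψ
  rwa [harg] at key

/-- (Lemma 3.1, point 1) The value function `𝓤̂` is continuous on
`(−∞,0] × M` and is `H`- and `L²_ℤ`-equivariant in the second variable. -/
theorem value_function_continuous_and_equivariant (d : ℕ) (D : GoodData d) :
    ContinuousOn (fun p : ℝ × Mspace d => Uhat D p.1 p.2) (Iic (0:ℝ) ×ˢ univ) ∧
    ∀ t ≤ (0:ℝ), ∀ (ψ : Mspace d) (h : CubeAuto d) (z : Mspace d), IsIntegerValued z →
      Uhat D t (Mcomp ψ h + z) = Uhat D t ψ := by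
  obtain ⟨c⟩ := exists_bounds d D
  exact ⟨Uhat_continuousOn c, fun t ht ψ h z hz => Uhat_equivariant c ht ψ h hz⟩

end MFG
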